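/- arXiv:1911.04743 — 5 statements merged into one kernel-verified Lean document; each statement's English description precedes it below -/
import Mathlib

section
/- For every n ≥ 6, there exists an n-vertex tree that is a max-swap equilibrium for pessimistic players with 3-local information and whose diameter is at least (n−2)/2. -/
open SimpleGraph

namespace SwapGame

/-- The set of vertices within distance `k` of `u` in `G` (the `k`-neighborhood). -/
def ball {V : Type} (G : SimpleGraph V) (u : V) (k : ℕ) : Set V :=
  {v | G.edist u v ≤ (k : ℕ∞)}

/-- The graph obtained from `G` by the edge swap `(v, w)` at `u`:
remove the edge `{u, v}` and add the edge `{u, w}`. -/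
def swapGraph {V : Type} (G : SimpleGraph V) (u v w : V) : SimpleGraph V :=
  SimpleGraph.fromEdgeSet ((G.edgeSet \ {s(u, v)}) ∪ {s(u, w)})

/-- The edge swap `(v, w)` at `u` is a legal move for a player with `k`-local information:
`v` is a neighbor of `u` and `w` is a non-neighbor (other than `u`) within distance `k`. -/
def ValidSwap {V : Type} (G : SimpleGraph V) (k : ℕ) (u v w : V) : Prop :=
  G.Adj u v ∧ G.edist u w ≤ (k : ℕ∞) ∧ ¬ G.Adj u w ∧ w ≠ u

/-- `H` (a graph on `W`, with `ι` identifying the view inside `H`) is a finite connected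
graph compatible with `u`'s `k`-local view in `G`. -/
def Compatible {V : Type} (G : SimpleGraph V) (k : ℕ) (u : V)
    {W : Type} (H : SimpleGraph W) (ι : V → W) : Prop :=
  Finite W ∧ H.Connected ∧ Set.InjOn ι (ball G u k) ∧
  {x : W | H.edist (ι u) x ≤ (k : ℕ∞)} = ι '' ball G u k ∧
  ∀ a ∈ ball G u k, ∀ b ∈ ball G u k, (H.Adj (ι a) (ι b) ↔ G.Adj a b)

/-- SUM-cost of player `u` in `H` (`⊤` when `H` is disconnected). -/
noncomputable def cSum {W : Type} (H : SimpleGraph W) (u : W) : ℕ∞ :=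
  ∑' v, H.edist u v

/-- MAX-cost (eccentricity) of player `u` in `H` (`⊤` when `H` is disconnected). -/
noncomputable def cMax {W : Type} (H : SimpleGraph W) (u : W) : ℕ∞ :=
  ⨆ v, H.edist u v

/-- A pessimistic player `u` with `k`-local information is unhappy in `G` w.r.t. the
SUM-cost via the edge swap `(v, w)`: the swap strictly decreases `u`'s cost in every
compatible global graph. -/
def UnhappySumVia {V : Type} (G : SimpleGraph V) (k : ℕ) (u v w : V) : Prop :=
  ValidSwap G k u v w ∧
  ∀ (W : Type) (H : SimpleGraph W) (ι : V → W), Compatible G k u H ι →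
    cSum (swapGraph H (ι u) (ι v) (ι w)) (ι u) < cSum H (ι u)

/-- Pessimistic unhappiness w.r.t. the MAX-cost via the edge swap `(v, w)`. -/
def UnhappyMaxVia {V : Type} (G : SimpleGraph V) (k : ℕ) (u v w : V) : Prop :=
  ValidSwap G k u v w ∧
  ∀ (W : Type) (H : SimpleGraph W) (ι : V → W), Compatible G k u H ι →
    cMax (swapGraph H (ι u) (ι v) (ι w)) (ι u) < cMax H (ι u)

/-- Weakly pessimistic unhappiness w.r.t. the SUM-cost via the edge swap `(v, w)`:
the swap does not increase `u`'s cost in any compatible global graph. -/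
def WeakUnhappySumVia {V : Type} (G : SimpleGraph V) (k : ℕ) (u v w : V) : Prop :=
  ValidSwap G k u v w ∧
  ∀ (W : Type) (H : SimpleGraph W) (ι : V → W), Compatible G k u H ι →
    cSum (swapGraph H (ι u) (ι v) (ι w)) (ι u) ≤ cSum H (ι u)

/-- Weakly pessimistic unhappiness w.r.t. the MAX-cost via the edge swap `(v, w)`. -/
def WeakUnhappyMaxVia {V : Type} (G : SimpleGraph V) (k : ℕ) (u v w : V) : Prop :=
  ValidSwap G k u v w ∧
  ∀ (W : Type) (H : SimpleGraph W) (ι : V → W), Compatible G k u H ι →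
    cMax (swapGraph H (ι u) (ι v) (ι w)) (ι u) ≤ cMax H (ι u)

/-- Optimistic unhappiness w.r.t. the SUM-cost via the edge swap `(v, w)`:
the swap strictly decreases `u`'s cost in some compatible global graph
(with the swapped graph connected). -/
def OptUnhappySumVia {V : Type} (G : SimpleGraph V) (k : ℕ) (u v w : V) : Prop :=
  ValidSwap G k u v w ∧
  ∃ (W : Type) (H : SimpleGraph W) (ι : V → W), Compatible G k u H ι ∧
    (swapGraph H (ι u) (ι v) (ι w)).Connected ∧
    cSum (swapGraph H (ι u) (ι v) (ι w)) (ι u) < cSum H (ι u)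

/-- Optimistic unhappiness w.r.t. the MAX-cost via the edge swap `(v, w)`. -/
def OptUnhappyMaxVia {V : Type} (G : SimpleGraph V) (k : ℕ) (u v w : V) : Prop :=
  ValidSwap G k u v w ∧
  ∃ (W : Type) (H : SimpleGraph W) (ι : V → W), Compatible G k u H ι ∧
    (swapGraph H (ι u) (ι v) (ι w)).Connected ∧
    cMax (swapGraph H (ι u) (ι v) (ι w)) (ι u) < cMax H (ι u)

/-- Sum-swap equilibrium for pessimistic players with `k`-local information. -/
def SumEquilibrium {V : Type} (G : SimpleGraph V) (k : ℕ) : Prop :=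
  ∀ u : V, ¬ ∃ v w, UnhappySumVia G k u v w

/-- Max-swap equilibrium for pessimistic players with `k`-local information. -/
def MaxEquilibrium {V : Type} (G : SimpleGraph V) (k : ℕ) : Prop :=
  ∀ u : V, ¬ ∃ v w, UnhappyMaxVia G k u v w

/-- Sum-swap equilibrium for weakly pessimistic players with `k`-local information. -/
def WeakSumEquilibrium {V : Type} (G : SimpleGraph V) (k : ℕ) : Prop :=
  ∀ u : V, ¬ ∃ v w, WeakUnhappySumVia G k u v w

/-- Max-swap equilibrium for weakly pessimistic players with `k`-local information. -/
def WeakMaxEquilibrium {V : Type} (G : SimpleGraph V) (k : ℕ) : Prop :=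
  ∀ u : V, ¬ ∃ v w, WeakUnhappyMaxVia G k u v w

/-- Sum-swap equilibrium for optimistic players with `k`-local information. -/
def OptSumEquilibrium {V : Type} (G : SimpleGraph V) (k : ℕ) : Prop :=
  ∀ u : V, ¬ ∃ v w, OptUnhappySumVia G k u v w

/-- Max-swap equilibrium for optimistic players with `k`-local information. -/
def OptMaxEquilibrium {V : Type} (G : SimpleGraph V) (k : ℕ) : Prop :=
  ∀ u : V, ¬ ∃ v w, OptUnhappyMaxVia G k u v w

/-- Social SUM-cost of a (connected, finite) graph, as a natural number. -/
noncomputable def scSum {W : Type} [Fintype W] (H : SimpleGraph W) : ℕ :=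
  ∑ u : W, ∑ v : W, H.dist u v

/-- Social MAX-cost of a (connected, finite) graph, as a natural number. -/
noncomputable def scMax {W : Type} [Fintype W] (H : SimpleGraph W) : ℕ :=
  ∑ u : W, Finset.univ.sup (H.dist u)

/-- Price of anarchy over `n`-vertex trees for a given notion of equilibrium and
social cost: (max social cost of an equilibrium tree) / (min social cost of a tree). -/
noncomputable def PoA (n : ℕ) (eqPred : SimpleGraph (Fin n) → Prop)
    (sc : SimpleGraph (Fin n) → ℕ) : ℚ :=
  ((sSup {m : ℕ | ∃ T : SimpleGraph (Fin n), T.IsTree ∧ eqPred T ∧ sc T = m} : ℕ) : ℚ) /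
  ((sInf {m : ℕ | ∃ T : SimpleGraph (Fin n), T.IsTree ∧ sc T = m} : ℕ) : ℚ)


section Aux

variable {V : Type} {G : SimpleGraph V}

variable {V : Type} {G : SimpleGraph V}

/-- Potential lower bound along walks. -/
lemma potential_walk (f : V → ℕ) (hf : ∀ a b, G.Adj a b → f b ≤ f a + 1)
    {x y : V} (p : G.Walk x y) : f y ≤ f x + p.length := by
  induction p with
  | nil => simp
  | cons h q ih =>
      have := hf _ _ h
      simp only [Walk.length_cons]
      omega

lemma three_le_edist {u z : V} (h0 : u ≠ z) (h1 : ¬ G.Adj u z)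
    (h2 : ∀ a, G.Adj u a → ¬ G.Adj a z) : 3 ≤ G.edist u z := by
  by_contra hlt
  push_neg at hlt
  have hne : G.edist u z ≠ ⊤ := by
    intro h; rw [h] at hlt; exact (not_top_lt hlt)
  obtain ⟨p, hp⟩ := exists_walk_of_edist_ne_top hne
  have hlen : p.length ≤ 2 := by
    have : (p.length : ℕ∞) < 3 := by rw [hp]; exact hlt
    exact_mod_cast Nat.lt_succ_iff.mp (by exact_mod_cast this)
  cases p with
  | nil => exact h0 rfl
  | cons h q =>
    cases q with
    | nil => exact h1 h
    | cons h' r =>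
      cases r with
      | nil => exact h2 _ h h'
      | cons h'' s => simp [Walk.length_cons] at hlen

variable {V : Type} {G : SimpleGraph V}

lemma adj_edist_le_one {a b : V} (h : G.Adj a b) : G.edist a b ≤ 1 := by
  have := edist_le (Walk.cons h Walk.nil)
  simpa using this

lemma mem_ball_self (u : V) : u ∈ ball G u 3 := by
  simp [ball]

def bgraph (G : SimpleGraph V) (u : V) : SimpleGraph (ball G u 3) := G.comap Subtype.val

open Classical in
noncomputable def biota (G : SimpleGraph V) (u : V) : V → ball G u 3 :=
  fun x => if h : x ∈ ball G u 3 then ⟨x, h⟩ else ⟨u, mem_ball_self u⟩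

lemma biota_mem {u x : V} (h : x ∈ ball G u 3) : biota G u x = ⟨x, h⟩ := by
  simp [biota, h]

lemma bgraph_edist_le_aux (u : V) :
    ∀ k : ℕ, k ≤ 3 → ∀ xv : V, ∀ hxv : xv ∈ ball G u 3, G.edist u xv ≤ (k : ℕ∞) →
      (bgraph G u).edist ⟨u, mem_ball_self u⟩ ⟨xv, hxv⟩ ≤ (k : ℕ∞) := by
  intro k
  induction k with
  | zero =>
    intro _ xv hxv hx
    have hxu : xv = u := by
      have := edist_eq_zero_iff.mp (le_antisymm (by exact_mod_cast hx) zero_le)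
      exact this.symm
    subst hxu
    simp
  | succ k ih =>
    intro hk3 xv hxv hx
    by_cases hxk : G.edist u xv ≤ (k : ℕ∞)
    · exact le_trans (ih (by omega) xv hxv hxk) (by exact_mod_cast Nat.le_succ k)
    · have hne : G.edist xv u ≠ ⊤ := by
        rw [SimpleGraph.edist_comm]
        intro h; rw [h] at hx; exact ENat.coe_ne_top (k+1) (top_le_iff.mp hx)
      obtain ⟨p, hp⟩ := exists_walk_of_edist_ne_top hne
      cases p with
      | nil => exact absurd (by simp : G.edist u u ≤ (k:ℕ∞)) (by simpa using hxk)
      | @cons _ y _ h q =>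
        -- h : G.Adj xv y, q : G.Walk y u
        have hql : (q.length : ℕ∞) ≤ (k : ℕ∞) := by
          have h1 : G.edist xv u ≤ (k+1 : ℕ) := by rw [SimpleGraph.edist_comm]; exact_mod_cast hx
          rw [← hp] at h1
          simp only [Walk.length_cons] at h1
          exact_mod_cast (by exact_mod_cast h1 : q.length + 1 ≤ k + 1) |> Nat.succ_le_succ_iff.mp |> Nat.cast_le.mpr
        have hyu : G.edist u y ≤ (k : ℕ∞) := by
          rw [SimpleGraph.edist_comm]
          exact le_trans (edist_le q) hql
        have hymem : y ∈ ball G u 3 := by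
          simp only [ball, Set.mem_setOf_eq]
          exact le_trans hyu (by exact_mod_cast by omega : (k:ℕ∞) ≤ (3:ℕ))
        have hstep : (bgraph G u).Adj ⟨y, hymem⟩ ⟨xv, hxv⟩ := by
          simp [bgraph, comap_adj]
          exact h.symm
        calc (bgraph G u).edist ⟨u, mem_ball_self u⟩ ⟨xv, hxv⟩
            ≤ (bgraph G u).edist ⟨u, mem_ball_self u⟩ ⟨y, hymem⟩
              + (bgraph G u).edist ⟨y, hymem⟩ ⟨xv, hxv⟩ := SimpleGraph.edist_triangle
          _ ≤ (k : ℕ∞) + 1 := add_le_add (ih (by omega) y hymem hyu) (adj_edist_le_one hstep)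
          _ = ((k+1 : ℕ) : ℕ∞) := by push_cast; ring
lemma bgraph_edist_le3 {u : V} (x : ball G u 3) :
    (bgraph G u).edist ⟨u, mem_ball_self u⟩ x ≤ ((3:ℕ) : ℕ∞) := by
  obtain ⟨xv, hxv⟩ := x
  exact bgraph_edist_le_aux u 3 le_rfl xv hxv hxv

lemma bgraph_connected (u : V) : (bgraph G u).Connected := by
  rw [connected_iff]
  refine ⟨fun x y => ?_, ⟨⟨u, mem_ball_self u⟩⟩⟩
  have hx := bgraph_edist_le3 (G := G) x
  have hy := bgraph_edist_le3 (G := G) y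
  have rx : (bgraph G u).Reachable ⟨u, mem_ball_self u⟩ x :=
    reachable_of_edist_ne_top (ne_top_of_le_ne_top (ENat.coe_ne_top 3) hx)
  have ry : (bgraph G u).Reachable ⟨u, mem_ball_self u⟩ y :=
    reachable_of_edist_ne_top (ne_top_of_le_ne_top (ENat.coe_ne_top 3) hy)
  exact rx.symm.trans ry

lemma swapGraph_adj {H : SimpleGraph V} {u v w a b : V} :
    (swapGraph H u v w).Adj a b ↔
      ((H.Adj a b ∧ s(a,b) ≠ s(u,v)) ∨ s(a,b) = s(u,w)) ∧ a ≠ b := by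
  simp only [swapGraph, fromEdgeSet_adj, Set.mem_union, Set.mem_diff, Set.mem_singleton_iff,
    mem_edgeSet]

lemma bgraph_compatible [Finite V] (u : V) :
    Compatible G 3 u (bgraph G u) (biota G u) := by
  refine ⟨inferInstance, bgraph_connected u, ?_, ?_, ?_⟩
  · intro a ha b hb h
    rw [biota_mem ha, biota_mem hb] at h
    exact congrArg Subtype.val h
  · ext x
    simp only [Set.mem_setOf_eq]
    constructor
    · intro _
      obtain ⟨a, ha⟩ := x
      exact ⟨a, ha, biota_mem ha⟩
    · intro _
      rw [biota_mem (mem_ball_self u)]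
      exact bgraph_edist_le3 x
  · intro a ha b hb
    rw [biota_mem ha, biota_mem hb]
    simp [bgraph]

lemma cMax_bgraph_le [Finite V] (u : V) :
    cMax (bgraph G u) (biota G u u) ≤ ((3:ℕ) : ℕ∞) := by
  rw [biota_mem (mem_ball_self u)]
  exact iSup_le fun x => bgraph_edist_le3 x

theorem maxEquilibrium_of_local [Finite V]
    (htf : ∀ a b c : V, G.Adj a b → G.Adj b c → G.Adj c a → False)
    (hc4 : ∀ a b c d : V, G.Adj a b → G.Adj b c → G.Adj c d → G.Adj d a → b ≠ d → a ≠ c → False)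
    (hdeg : ∀ v u w : V, G.Adj v u → G.Adj v w → u ≠ w → ∃ z, G.Adj v z ∧ z ≠ u ∧ z ≠ w) :
    MaxEquilibrium G 3 := by
  rintro u ⟨v, w, ⟨hadj, hw3, hnadj, hwu⟩, hall⟩
  obtain ⟨z, hz1, hz2, hz3, hz4, hz5, hz6⟩ :
      ∃ z : V, z ≠ u ∧ z ≠ w ∧ ¬ G.Adj w z ∧ (G.Adj u z → z = v) ∧
        (∀ a, G.Adj u a → a ≠ v → ¬ G.Adj a z) ∧ G.edist u z ≤ ((3:ℕ) : ℕ∞) := by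
    by_cases hvw : G.Adj v w
    · obtain ⟨z, hvz, hzu, hzw⟩ := hdeg v u w hadj.symm hvw (Ne.symm hwu)
      refine ⟨z, hzu, hzw, ?_, ?_, ?_, ?_⟩
      · intro h; exact htf v w z hvw h hvz.symm
      · intro h; exact (htf u v z hadj hvz h.symm).elim
      · intro a hua hav haz
        exact hc4 u v z a hadj hvz haz.symm hua.symm (Ne.symm hav) (Ne.symm hzu)
      · calc G.edist u z ≤ G.edist u v + G.edist v z := SimpleGraph.edist_triangle
          _ ≤ 1 + 1 := add_le_add (adj_edist_le_one hadj) (adj_edist_le_one hvz)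
          _ ≤ ((3:ℕ) : ℕ∞) := by norm_num
    · refine ⟨v, hadj.ne', ?_, fun h => hvw h.symm, fun _ => rfl, ?_, ?_⟩
      · rintro rfl; exact hnadj hadj
      · intro a hua hav hav2; exact htf u a v hua hav2 hadj.symm
      · exact le_trans (adj_edist_le_one hadj) (by norm_num)
  have hzb : z ∈ ball G u 3 := hz6
  have hvb : v ∈ ball G u 3 :=
    le_trans (adj_edist_le_one hadj) (by norm_num)
  have hwb : w ∈ ball G u 3 := hw3
  -- distance in swapped global graph
  have h3G' : ((3:ℕ) : ℕ∞) ≤ (swapGraph G u v w).edist u z := by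
    apply three_le_edist (Ne.symm hz1)
    · intro h
      rw [swapGraph_adj] at h
      rcases h.1 with ⟨huz, hne⟩ | heq
      · exact hne (by rw [hz4 huz])
      · exact hz2 (Sym2.congr_right.mp heq)
    · intro a h1 h2
      rw [swapGraph_adj] at h1 h2
      rcases h1.1 with ⟨hua, hne1⟩ | heq1
      · have hav : a ≠ v := by rintro rfl; exact hne1 rfl
        rcases h2.1 with ⟨haz, _⟩ | heq2
        · exact hz5 a hua hav haz
        · rcases Sym2.eq_iff.mp heq2 with ⟨rfl, rfl⟩ | ⟨rfl, rfl⟩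
          · exact hz2 rfl
          · exact hz1 rfl
      · have haw : a = w := Sym2.congr_right.mp heq1
        subst haw
        rcases h2.1 with ⟨haz, _⟩ | heq2
        · exact hz3 haz
        · rcases Sym2.eq_iff.mp heq2 with ⟨_, rfl⟩ | ⟨_, rfl⟩
          · exact hz2 rfl
          · exact hz1 rfl
  -- homomorphism from swapped ball graph to swapped global graph
  have hmap : ∀ a b : ball G u 3,
      (swapGraph (bgraph G u) (biota G u u) (biota G u v) (biota G u w)).Adj a b →
      (swapGraph G u v w).Adj a.1 b.1 := by
    intro a b hab
    rw [swapGraph_adj] at hab ⊢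
    have hval : ∀ x y : ball G u 3, (x:V) = y → x = y := fun x y h => Subtype.ext h
    refine ⟨?_, fun h => hab.2 (Subtype.ext h)⟩
    rcases hab.1 with ⟨hB, hne⟩ | heq
    · left
      refine ⟨hB, ?_⟩
      intro h
      apply hne
      rcases Sym2.eq_iff.mp h with ⟨ha, hb⟩ | ⟨ha, hb⟩
      · rw [show a = biota G u u from Subtype.ext (by rw [biota_mem (mem_ball_self u)]; exact ha),
           show b = biota G u v from Subtype.ext (by rw [biota_mem hvb]; exact hb)]
      · rw [show a = biota G u v from Subtype.ext (by rw [biota_mem hvb]; exact ha),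
           show b = biota G u u from Subtype.ext (by rw [biota_mem (mem_ball_self u)]; exact hb),
           Sym2.eq_swap]
    · right
      rcases Sym2.eq_iff.mp heq with ⟨ha, hb⟩ | ⟨ha, hb⟩
      · rw [show (a:V) = u from by rw [ha, biota_mem (mem_ball_self u)],
           show (b:V) = w from by rw [hb, biota_mem hwb]]
      · rw [show (a:V) = w from by rw [ha, biota_mem hwb],
           show (b:V) = u from by rw [hb, biota_mem (mem_ball_self u)], Sym2.eq_swap]
  set B' := swapGraph (bgraph G u) (biota G u u) (biota G u v) (biota G u w) with hB'
  have h3B' : ((3:ℕ) : ℕ∞) ≤ B'.edist (biota G u u) (biota G u z) := by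
    by_cases hB : B'.edist (biota G u u) (biota G u z) = ⊤
    · rw [hB]; exact le_top
    · obtain ⟨p, hp⟩ := exists_walk_of_edist_ne_top hB
      rw [← hp]
      have h1 := SimpleGraph.edist_le
        (p.map (⟨Subtype.val, fun {a b} h => hmap a b h⟩ : B' →g swapGraph G u v w))
      rw [Walk.length_map] at h1
      have e1 : ((biota G u u : ball G u 3) : V) = u := by rw [biota_mem (mem_ball_self u)]
      have e2 : ((biota G u z : ball G u 3) : V) = z := by rw [biota_mem hzb]
      rw [show ((⟨Subtype.val, fun {a b} h => hmap a b h⟩ : B' →g swapGraph G u v w) :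
        ball G u 3 → V) = Subtype.val from rfl] at h1
      rw [e1, e2] at h1
      exact le_trans h3G' h1
  have hlt := hall (ball G u 3) (bgraph G u) (biota G u) (bgraph_compatible u)
  have h2 : cMax (bgraph G u) (biota G u u) ≤ ((3:ℕ) : ℕ∞) := cMax_bgraph_le u
  have h3 : ((3:ℕ) : ℕ∞) ≤ cMax B' (biota G u u) :=
    le_trans h3B' (le_iSup (fun x => B'.edist (biota G u u) x) (biota G u z))
  exact absurd hlt (not_lt.mpr (le_trans h2 h3))

end Aux

section Caterpillar

/-- parent map for the caterpillar -/
def cpar (n k : ℕ) : ℕ :=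
  if k < n/2+1 then k - 1 else if k < 2*(n/2+1) - 2 then k - (n/2+1) + 1 else 1

/-- depth map for the caterpillar -/
def cdel (n k : ℕ) : ℕ :=
  if k < n/2+1 then k else if k < 2*(n/2+1) - 2 then k - (n/2+1) + 2 else 2

lemma cpar_lt {n k : ℕ} (hk : k < n) (h0 : k ≠ 0) : cpar n k < k := by
  unfold cpar; split_ifs <;> omega

lemma cpar_lt_n {n k : ℕ} (hk : k < n) : cpar n k < n := by
  unfold cpar; split_ifs <;> omega

lemma cdel_par {n k : ℕ} (hn : 6 ≤ n) (hk : k < n) (h0 : k ≠ 0) :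
    cdel n k = cdel n (cpar n k) + 1 := by
  unfold cdel cpar; split_ifs <;> omega

lemma cpar_zero (n : ℕ) : cpar n 0 = 0 := by unfold cpar; split_ifs <;> omega

/-- the caterpillar tree -/
def cat (n : ℕ) : SimpleGraph (Fin n) where
  Adj a b := (a.val ≠ 0 ∧ b.val = cpar n a.val) ∨ (b.val ≠ 0 ∧ a.val = cpar n b.val)
  symm := by constructor; intro a b h; tauto
  loopless := by
    constructor; intro a h
    rcases h with ⟨h0, he⟩ | ⟨h0, he⟩ <;>
      exact absurd he.symm (Nat.ne_of_lt (cpar_lt a.isLt h0))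

lemma cat_adj_cdel {n : ℕ} (hn : 6 ≤ n) {a b : Fin n} (h : (cat n).Adj a b) :
    (a.val ≠ 0 ∧ b.val = cpar n a.val ∧ cdel n a.val = cdel n b.val + 1) ∨
    (b.val ≠ 0 ∧ a.val = cpar n b.val ∧ cdel n b.val = cdel n a.val + 1) := by
  rcases h with ⟨h0, he⟩ | ⟨h0, he⟩
  · exact Or.inl ⟨h0, he, by rw [he]; exact cdel_par hn a.isLt h0⟩
  · exact Or.inr ⟨h0, he, by rw [he]; exact cdel_par hn b.isLt h0⟩

lemma cat_triangle_free {n : ℕ} (hn : 6 ≤ n) :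
    ∀ a b c : Fin n, (cat n).Adj a b → (cat n).Adj b c → (cat n).Adj c a → False := by
  intro a b c h1 h2 h3
  rcases cat_adj_cdel hn h1 with ⟨_, _, e1⟩ | ⟨_, _, e1⟩ <;>
    rcases cat_adj_cdel hn h2 with ⟨_, _, e2⟩ | ⟨_, _, e2⟩ <;>
      rcases cat_adj_cdel hn h3 with ⟨_, _, e3⟩ | ⟨_, _, e3⟩ <;> omega

lemma cat_c4_free {n : ℕ} (hn : 6 ≤ n) :
    ∀ a b c d : Fin n, (cat n).Adj a b → (cat n).Adj b c → (cat n).Adj c d →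
      (cat n).Adj d a → b ≠ d → a ≠ c → False := by
  intro a b c d h1 h2 h3 h4 hbd hac
  have hbd' : b.val ≠ d.val := fun h => hbd (Fin.ext h)
  have hac' : a.val ≠ c.val := fun h => hac (Fin.ext h)
  rcases cat_adj_cdel hn h1 with ⟨f1, e1, g1⟩ | ⟨f1, e1, g1⟩ <;>
    rcases cat_adj_cdel hn h2 with ⟨f2, e2, g2⟩ | ⟨f2, e2, g2⟩ <;>
      rcases cat_adj_cdel hn h3 with ⟨f3, e3, g3⟩ | ⟨f3, e3, g3⟩ <;>
        rcases cat_adj_cdel hn h4 with ⟨f4, e4, g4⟩ | ⟨f4, e4, g4⟩ <;> omega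

lemma cat_deg {n : ℕ} (hn : 6 ≤ n) :
    ∀ v u w : Fin n, (cat n).Adj v u → (cat n).Adj v w → u ≠ w →
      ∃ z, (cat n).Adj v z ∧ z ≠ u ∧ z ≠ w := by
  intro v u w h1 h2 hne
  have hne' : u.val ≠ w.val := fun h => hne (Fin.ext h)
  -- show v is internal
  have hkey : ∀ x : Fin n, (cat n).Adj v x →
      (v.val ≠ 0 ∧ x.val = cpar n v.val) ∨ (x.val ≠ 0 ∧ v.val = cpar n x.val) := fun x h => h
  by_cases hv0 : v.val = 0
  · -- all neighbours are 1
    have hval : ∀ x : Fin n, (cat n).Adj v x → x.val = 1 := by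
      intro x hx
      rcases hkey x hx with ⟨h0, _⟩ | ⟨h0, he⟩
      · exact absurd hv0 h0
      · rw [hv0] at he
        have hx' : x.val < n := x.isLt
        unfold cpar at he
        split_ifs at he <;> omega
    exact absurd (hval u h1 ▸ hval w h2 ▸ rfl) hne'
  by_cases hvm : v.val + 2 ≤ n/2 + 1
  · -- internal: candidates v-1, v+1, v + (n/2+1) - 1
    have hn2 : n/2 + 1 ≤ n - 1 := by omega
    refine ?_
    have hz1 : (cat n).Adj v ⟨v.val - 1, by omega⟩ := by
      left
      refine ⟨hv0, ?_⟩
      show v.val - 1 = cpar n v.val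
      unfold cpar; split_ifs <;> omega
    have hz2 : (cat n).Adj v ⟨v.val + 1, by omega⟩ := by
      right
      refine ⟨by simp, ?_⟩
      show v.val = cpar n (v.val + 1)
      unfold cpar; split_ifs <;> omega
    have hz3 : (cat n).Adj v ⟨v.val + (n/2+1) - 1, by omega⟩ := by
      right
      refine ⟨by simp; omega, ?_⟩
      show v.val = cpar n (v.val + (n/2+1) - 1)
      unfold cpar; split_ifs <;> omega
    have hchoice : (v.val - 1 ≠ u.val ∧ v.val - 1 ≠ w.val) ∨
        (v.val + 1 ≠ u.val ∧ v.val + 1 ≠ w.val) ∨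
        (v.val + (n/2+1) - 1 ≠ u.val ∧ v.val + (n/2+1) - 1 ≠ w.val) := by omega
    rcases hchoice with ⟨c1, c2⟩ | ⟨c1, c2⟩ | ⟨c1, c2⟩
    · exact ⟨_, hz1, fun h => c1 (congrArg Fin.val h), fun h => c2 (congrArg Fin.val h)⟩
    · exact ⟨_, hz2, fun h => c1 (congrArg Fin.val h), fun h => c2 (congrArg Fin.val h)⟩
    · exact ⟨_, hz3, fun h => c1 (congrArg Fin.val h), fun h => c2 (congrArg Fin.val h)⟩
  · -- v has a single neighbour (its parent)
    have hval : ∀ x : Fin n, (cat n).Adj v x → x.val = cpar n v.val := by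
      intro x hx
      rcases hkey x hx with ⟨_, he⟩ | ⟨h0, he⟩
      · exact he
      · exfalso
        have hx' : x.val < n := x.isLt
        unfold cpar at he
        split_ifs at he <;> omega
    exact absurd (hval u h1 ▸ hval w h2 ▸ rfl) hne'

lemma cat_reach_zero {n : ℕ} (hn : 6 ≤ n) (a : Fin n) :
    (cat n).Reachable a ⟨0, by omega⟩ := by
  obtain ⟨k, hk⟩ : ∃ k, a.val = k := ⟨a.val, rfl⟩
  induction k using Nat.strong_induction_on generalizing a with
  | _ k ih =>
    by_cases h0 : a.val = 0
    · have : a = ⟨0, by omega⟩ := Fin.ext h0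
      rw [this]
    · have hlt : cpar n a.val < a.val := cpar_lt a.isLt h0
      have hpn : cpar n a.val < n := lt_trans hlt a.isLt
      have hadj : (cat n).Adj a ⟨cpar n a.val, hpn⟩ := Or.inl ⟨h0, rfl⟩
      exact hadj.reachable.trans (ih (cpar n a.val) (hk ▸ hlt) _ rfl)

lemma cat_connected {n : ℕ} (hn : 6 ≤ n) : (cat n).Connected := by
  rw [connected_iff]
  exact ⟨fun a b => (cat_reach_zero hn a).trans (cat_reach_zero hn b).symm,
    ⟨⟨0, by omega⟩⟩⟩

lemma cat_acyclic {n : ℕ} (hn : 6 ≤ n) : (cat n).IsAcyclic := by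
  rw [isAcyclic_iff_forall_adj_isBridge]
  suffices key : ∀ x y : Fin n, (cat n).Adj x y → x.val ≠ 0 → y.val = cpar n x.val →
      ¬((cat n) \ fromEdgeSet {s(x,y)}).Reachable x y by
    intro a b hab
    rw [isBridge_iff]
    refine ?_
    rcases hab with ⟨h0, he⟩ | ⟨h0, he⟩
    · exact key a b (Or.inl ⟨h0, he⟩) h0 he
    · intro hr
      apply key b a (Or.inl ⟨h0, he⟩) h0 he
      rw [show s(a,b) = s(b,a) from Sym2.eq_swap] at hr
      exact hr.symm
  intro x y hxy h0 hy hreach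
  set K := (cat n) \ fromEdgeSet {s(x,y)} with hK
  have step : ∀ c d : Fin n, K.Adj c d →
      (∃ j, (cpar n)^[j] c.val = x.val) → ∃ j, (cpar n)^[j] d.val = x.val := by
    rintro c d hcd ⟨j, hj⟩
    have hcd' : (cat n).Adj c d ∧ s(c,d) ≠ s(x,y) := by
      rw [hK, sdiff_adj, fromEdgeSet_adj] at hcd
      exact ⟨hcd.1, fun h => hcd.2 ⟨h, hcd.1.ne⟩⟩
    rcases hcd'.1 with ⟨hc0, hd⟩ | ⟨hd0, hc⟩
    · rcases j with _ | j
      · -- c = x, d = y : excluded edge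
        exfalso
        apply hcd'.2
        have hcx : c = x := Fin.ext hj
        have hdy : d = y := Fin.ext (by rw [hd, hcx, ← hy])
        rw [hcx, hdy]
      · refine ⟨j, ?_⟩
        rw [Function.iterate_succ_apply] at hj
        rw [hd]
        exact hj
    · exact ⟨j+1, by rw [Function.iterate_succ_apply, ← hc]; exact hj⟩
  have walkP : ∀ {c d : Fin n} (p : K.Walk c d),
      (∃ j, (cpar n)^[j] c.val = x.val) → ∃ j, (cpar n)^[j] d.val = x.val := by
    intro c d p
    induction p with
    | nil => exact id
    | cons h q ih => exact fun hc => ih (step _ _ h hc)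
  obtain ⟨p⟩ := hreach
  obtain ⟨j, hj⟩ := walkP p ⟨0, rfl⟩
  -- cdel decreases along iterates
  have iter : ∀ (j : ℕ) (z : ℕ), z < n → cdel n ((cpar n)^[j] z) ≤ cdel n z ∧ (cpar n)^[j] z < n := by
    intro j
    induction j with
    | zero => exact fun z hz => ⟨le_rfl, hz⟩
    | succ j ih =>
      intro z hz
      obtain ⟨h1, h2⟩ := ih z hz
      rw [Function.iterate_succ_apply']
      constructor
      · by_cases hz0 : (cpar n)^[j] z = 0
        · rw [hz0, cpar_zero]; rw [hz0] at h1; exact h1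
        · have := cdel_par hn h2 hz0
          omega
      · exact cpar_lt_n h2
  have hle := (iter j y.val y.isLt).1
  rw [hj] at hle
  have := cdel_par hn x.isLt h0
  rw [← hy] at this
  omega
lemma cat_dist {n : ℕ} (hn : 6 ≤ n)
    (hreach : (cat n).Reachable ⟨0, by omega⟩ ⟨n/2, by omega⟩) :
    n - 2 ≤ 2 * (cat n).dist (⟨0, by omega⟩ : Fin n) ⟨n/2, by omega⟩ := by
  obtain ⟨p, hp⟩ := hreach.exists_walk_length_eq_dist
  have hpot := potential_walk (G := cat n) (fun a => cdel n a.val) ?_ p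
  · simp only at hpot
    have h1 : cdel n (n/2) = n/2 := by unfold cdel; split_ifs <;> omega
    have h2 : cdel n 0 = 0 := by unfold cdel; split_ifs <;> omega
    rw [hp] at hpot
    simp only [h1, h2] at hpot
    omega
  · intro a b h
    show cdel n b.val ≤ cdel n a.val + 1
    rcases cat_adj_cdel hn h with ⟨_, _, e⟩ | ⟨_, _, e⟩ <;> omega

end Caterpillar

theorem stmt11 (n : ℕ) (hn : 6 ≤ n) :
    ∃ T : SimpleGraph (Fin n), T.IsTree ∧ MaxEquilibrium T 3 ∧
      ∃ x y : Fin n, n - 2 ≤ 2 * T.dist x y := by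
  refine ⟨cat n, ⟨cat_connected hn, cat_acyclic hn⟩, ?_, ⟨0, by omega⟩, ⟨n/2, by omega⟩,
    cat_dist hn ((cat_connected hn) _ _)⟩
  exact maxEquilibrium_of_local (cat_triangle_free hn) (cat_c4_free hn) (cat_deg hn)

end SwapGame
end

section
/- Every tree G whose diameter is larger than three contains a path P = v a b c w (on five consecutive vertices) such that (i) v is a leaf of G, and (ii) the depth of T_{G,P}(a) is at most one. -/
/-!
Let `y` be an end of a pair at distance at least four and `x` a vertex farthest from `y`, so
`d(x, y) ≥ 4` and the path from `x` to `y` starts with `x a b c w`. Every edge `uv` of this path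
is a bridge, so a vertex `z` on the side of `u` satisfies `d(z, y) = d(z, u) + 1 + d(v, y)`, and
the maximality of `x` gives `d(z, u) ≤ d(x, u)`. For `u = x` this forces every neighbour of `x`
other than `a` to be `x` itself, so `x` is a leaf; for `u = a` it bounds the depth of
`T(a)` by `d(x, a) = 1`.
-/

open SimpleGraph

namespace SimpleGraph

variable {V : Type*} {G H : SimpleGraph V}

lemma IsAcyclic.length_eq_dist_of_isPath (hG : G.IsAcyclic) {u v : V} {p : G.Walk u v}
    (hp : p.IsPath) : p.length = G.dist u v := by
  obtain ⟨q, hq, hql⟩ := p.reachable.exists_path_of_dist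
  have : (⟨p, hp⟩ : G.Path u v) = ⟨q, hq⟩ := (hG.subsingleton_path u v).elim _ _
  rw [← hql, Subtype.mk.inj this]

lemma IsAcyclic.dist_eq_of_le (hG : G.IsAcyclic) (hHG : H ≤ G) {u v : V} (h : H.Reachable u v) :
    H.dist u v = G.dist u v := by
  obtain ⟨p, hp, hpl⟩ := h.exists_path_of_dist
  rw [← hpl, ← hG.length_eq_dist_of_isPath (hp.mapLe hHG), Walk.length_mapLe]

/-- Shortest paths on the two sides of the bridge `uv` share no vertex, so joining them through
`uv` gives the unique path from `z` to `y`. -/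
lemma IsAcyclic.dist_eq_add_of_reachable_deleteEdges (hG : G.IsAcyclic) {u v z y : V}
    (huv : G.Adj u v) (hz : (G.deleteEdges {s(u, v)}).Reachable z u)
    (hy : (G.deleteEdges {s(u, v)}).Reachable v y) :
    G.dist z y = G.dist z u + 1 + G.dist v y := by
  classical
  set G' := G.deleteEdges {s(u, v)}
  have hle : G' ≤ G := deleteEdges_le _
  obtain ⟨p, hp, hpl⟩ := hz.exists_path_of_dist
  obtain ⟨q, hq, hql⟩ := hy.exists_path_of_dist
  have hdisj : ∀ t ∈ p.support, t ∉ q.support := fun t htp htq =>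
    isBridge_iff.mp (isAcyclic_iff_forall_adj_isBridge.mp hG huv)
      ((p.dropUntil t htp).reachable.symm.trans (q.takeUntil t htq).reachable.symm)
  have hpath : ((p.mapLe hle).append (.cons huv (q.mapLe hle))).IsPath := by
    refine Walk.IsPath.mk' ?_
    simp only [Walk.support_append, Walk.support_cons, List.tail_cons,
      Walk.support_mapLe_eq_support]
    exact List.nodup_append.mpr ⟨hp.support_nodup, hq.support_nodup,
      fun t htp _ htq hts => hdisj t htp (hts ▸ htq)⟩
  rw [← hG.length_eq_dist_of_isPath hpath, ← hG.dist_eq_of_le hle hz,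
    ← hG.dist_eq_of_le hle hy, ← hpl, ← hql]
  simp only [Walk.length_append, Walk.length_cons, Walk.length_mapLe]
  ring

lemma IsAcyclic.dist_le_of_forall_dist_le (hG : G.IsAcyclic) {u v x y z : V} (huv : G.Adj u v)
    (hmax : ∀ t, G.dist t y ≤ G.dist x y) (hx : (G.deleteEdges {s(u, v)}).Reachable x u)
    (hy : (G.deleteEdges {s(u, v)}).Reachable v y)
    (hz : (G.deleteEdges {s(u, v)}).Reachable z u) :
    G.dist z u ≤ G.dist x u := by
  have := hmax z
  rw [hG.dist_eq_add_of_reachable_deleteEdges huv hz hy,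
    hG.dist_eq_add_of_reachable_deleteEdges huv hx hy] at this
  omega

lemma Walk.IsPath.reachable_deleteEdges_of_cons {u v w : V} {h : G.Adj u v} {p : G.Walk v w}
    (hp : (Walk.cons h p).IsPath) : (G.deleteEdges {s(u, v)}).Reachable v w :=
  reachable_deleteEdges_iff_exists_walk.mpr
    ⟨p, fun he => ((Walk.cons_isPath_iff h p).mp hp).2 (p.fst_mem_support_of_mem_edges he)⟩

lemma reachable_deleteEdges_of_adj {S : Set (Sym2 V)} {u v : V} (huv : G.Adj u v)
    (hS : s(u, v) ∉ S) : (G.deleteEdges S).Reachable u v :=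
  Adj.reachable ((deleteEdges_adj).mpr ⟨huv, hS⟩)

lemma IsTree.degree_eq_one_of_forall_dist_le (hG : G.IsTree) {x y : V}
    [Fintype (G.neighborSet x)] (hxy : x ≠ y) (hmax : ∀ t, G.dist t y ≤ G.dist x y) :
    G.degree x = 1 := by
  obtain ⟨p, hp, -⟩ := hG.connected.exists_path_of_dist x y
  cases p with
  | nil => exact absurd rfl hxy
  | @cons _ a _ hxa q =>
    refine degree_eq_one_iff_existsUnique_adj.mpr ⟨a, hxa, fun z hxz => by_contra fun hza => ?_⟩
    have hzx : (G.deleteEdges {s(x, a)}).Reachable z x :=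
      reachable_deleteEdges_of_adj (G.adj_symm hxz) (by simp [hza, hxa.ne])
    have := hG.isAcyclic.dist_le_of_forall_dist_le hxa hmax .rfl hp.reachable_deleteEdges_of_cons hzx
    rw [SimpleGraph.dist_self, nonpos_iff_eq_zero, (hG.connected z x).dist_eq_zero_iff] at this
    exact G.ne_of_adj hxz this.symm

lemma IsAcyclic.edist_deleteEdges_le_one (hG : G.IsAcyclic) {S : Set (Sym2 V)} {x a b y z : V}
    (hxa : G.Adj x a) (hab : G.Adj a b) (hxb : x ≠ b) (hmax : ∀ t, G.dist t y ≤ G.dist x y)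
    (hby : (G.deleteEdges {s(a, b)}).Reachable b y) (hS : s(a, b) ∈ S)
    (hz : (G.deleteEdges S).Reachable a z) : (G.deleteEdges S).edist a z ≤ 1 := by
  have hza : G.dist z a ≤ G.dist x a :=
    hG.dist_le_of_forall_dist_le hab hmax
      (reachable_deleteEdges_of_adj hxa (by simp [hxa.ne, hxb])) hby (hz.mono (deleteEdges_anti (by simpa using hS))).symm
  rw [dist_eq_one_iff_adj.mpr hxa, SimpleGraph.dist_comm] at hza
  rw [← hz.coe_dist_eq_edist, hG.dist_eq_of_le (deleteEdges_le _) hz]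
  exact_mod_cast hza

end SimpleGraph

namespace SwapGame

theorem stmt12 {V : Type} [Fintype V] (G : SimpleGraph V) [DecidableRel G.Adj]
    (hG : G.IsTree) (hdiam : ∃ x y : V, 3 < G.edist x y) :
    ∃ v a b c w : V, G.Adj v a ∧ G.Adj a b ∧ G.Adj b c ∧ G.Adj c w ∧
      v ≠ b ∧ v ≠ c ∧ v ≠ w ∧ a ≠ c ∧ a ≠ w ∧ b ≠ w ∧
      G.degree v = 1 ∧
      ∀ x : V, (G.deleteEdges {s(v, a), s(a, b), s(b, c), s(c, w)}).Reachable a x →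
        (G.deleteEdges {s(v, a), s(a, b), s(b, c), s(c, w)}).edist a x ≤ 1 := by
  obtain ⟨x₀, y, hxy₀⟩ := hdiam
  have : Nonempty V := ⟨x₀⟩
  obtain ⟨x, hmax⟩ := Finite.exists_max (G.dist · y)
  have hlen : 4 ≤ G.dist x y := by
    have := (hG.connected x₀ y).coe_dist_eq_edist ▸ hxy₀
    exact le_trans (by exact_mod_cast this) (hmax x₀)
  obtain ⟨p, hp, hpl⟩ := hG.connected.exists_path_of_dist x y
  rcases p with _ | ⟨hxa, _ | ⟨hab, _ | ⟨hbc, _ | ⟨hcw, q⟩⟩⟩⟩ <;>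
    simp only [Walk.length_nil, Walk.length_cons] at hpl <;> try omega
  rename_i a b c w
  obtain ⟨⟨-, hxb, hxc, hxq⟩, ⟨-, hac, haq⟩, ⟨-, hbq⟩, -, -⟩ := by
    simpa only [Walk.support_cons, List.nodup_cons, List.mem_cons, not_or] using hp.support_nodup
  have hwq := q.start_mem_support
  refine ⟨x, a, b, c, w, hxa, hab, hbc, hcw, hxb, hxc, fun h => hxq (h ▸ hwq), hac,
    fun h => haq (h ▸ hwq), fun h => hbq (h ▸ hwq), ?_, fun z =>
      hG.isAcyclic.edist_deleteEdges_le_one hxa hab hxb hmax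
        hp.of_cons.reachable_deleteEdges_of_cons (by simp)⟩
  exact hG.degree_eq_one_of_forall_dist_le (fun h => hxq (h ▸ q.end_mem_support)) hmax

end SwapGame
end

section
/- For every k ≥ 4 and every n ≥ 2, every n-vertex tree that is a max-swap equilibrium for pessimistic players with k-local information has diameter at most three, and PoA_MAX(n, n−1, k) ≤ 3/2. -/
/-!
Let `u`, `y` be a diametral pair of an equilibrium tree with `d = dist u y ≥ 4`, put
`r = min d k` and let `w` be the vertex of the geodesic from `u` to `y` at distance `⌈r / 2⌉`
from `u`. Since `u` is a farthest vertex from `y`, every other vertex of `u`'s view branches off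
that geodesic no farther from `y` than `u` does, so it is reached from `w` inside the view, avoiding
`u`, in at most `r - 2` steps. Hence in every graph compatible with the view, swapping the first
edge of the geodesic for the edge `uw` brings every vertex of the view within `r - 1` of `u`,
whose eccentricity was at least `r`, and every vertex beyond the view closer by at least one
(route through the vertex where a geodesic from `u` leaves the view). So `u` is unhappy, and
equilibrium trees have diameter at most three.

A tree of diameter at most three has two vertices of eccentricity at most two (the middle of a
diametral path), so its social cost is at most `3n - 2`; a tree on `n ≥ 3` vertices has at most
one vertex of eccentricity one, so its social cost is at least `2n - 1`.
-/

open SimpleGraph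

namespace SimpleGraph

variable {V W : Type} {G : SimpleGraph V} {x y z a b c : V}

lemma Walk.dist_add_dist_of_length_eq_dist (p : G.Walk x y) (hp : p.length = G.dist x y)
    (hc : c ∈ p.support) : G.dist x c + G.dist c y = G.dist x y := by
  classical
  have hsplit := congrArg Walk.length (p.take_spec hc)
  rw [Walk.length_append] at hsplit
  have h₁ := dist_le (p.takeUntil c hc)
  have h₂ := dist_le (p.dropUntil c hc)
  have h₃ := (p.takeUntil c hc).reachable.dist_triangle_left y
  omega

lemma Walk.edist_le_length_of_mem_support (p : G.Walk x y) (hc : c ∈ p.support) :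
    G.edist x c ≤ p.length := by
  classical
  exact (edist_le (p.takeUntil c hc)).trans (by exact_mod_cast p.length_takeUntil_le_length hc)

lemma Reachable.exists_dist_eq_of_le (h : G.Reachable x y) {i : ℕ} (hi : i ≤ G.dist x y) :
    ∃ z, G.dist x z = i ∧ G.dist z y = G.dist x y - i := by
  obtain ⟨p, hp⟩ := h.exists_walk_length_eq_dist
  have hsum := p.dist_add_dist_of_length_eq_dist hp (p.getVert_mem_support i)
  have h₁ := dist_le (p.take i)
  have h₂ := dist_le (p.drop i)
  rw [Walk.take_length, hp] at h₁
  rw [Walk.drop_length, hp] at h₂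
  exact ⟨p.getVert i, by omega, by omega⟩

lemma Connected.dist_lt_card [Fintype V] (hG : G.Connected) (x y : V) :
    G.dist x y < Fintype.card V := by
  obtain ⟨p, hp, hlen⟩ := hG.exists_path_of_dist x y
  exact hlen ▸ hp.length_lt

lemma edist_le_length_of_adj_on {H : SimpleGraph W} {f : V → W} {s : Set V}
    (hf : ∀ x ∈ s, ∀ y ∈ s, G.Adj x y → H.Adj (f x) (f y)) :
    ∀ {a b : V} (p : G.Walk a b), (∀ x ∈ p.support, x ∈ s) →
      H.edist (f a) (f b) ≤ p.length
  | _, _, .nil, _ => by simp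
  | _, _, .cons hadj p, hp => by
    have hp' : ∀ x ∈ p.support, x ∈ s := fun x hx => hp x (by simp [hx])
    calc H.edist _ _ ≤ H.edist _ _ + H.edist _ _ := SimpleGraph.edist_triangle
      _ ≤ 1 + p.length := by
        gcongr
        · exact (edist_eq_one_iff_adj.mpr <|
            hf _ (hp _ (by simp)) _ (hp' _ p.start_mem_support) hadj).le
        · exact edist_le_length_of_adj_on hf p hp'
      _ = (Walk.cons hadj p).length := by simp [add_comm]

lemma Walk.IsPath.append_of_support_inter {p : G.Walk x y} {q : G.Walk y z} (hp : p.IsPath)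
    (hq : q.IsPath) (h : ∀ c ∈ p.support, c ∈ q.support → c = y) : (p.append q).IsPath := by
  rw [Walk.isPath_def, Walk.support_append]
  have hq' := hq.support_nodup
  rw [← q.cons_tail_support] at hq'
  refine hp.support_nodup.append (List.nodup_cons.mp hq').2 fun c hcp hcq => ?_
  have hcy : c = y := h c hcp (q.cons_tail_support ▸ List.mem_cons_of_mem _ hcq)
  exact (List.nodup_cons.mp hq').1 (hcy ▸ hcq)

namespace IsTree

variable (hG : G.IsTree)
include hG

lemma length_eq_dist {p : G.Walk x y} (hp : p.IsPath) : p.length = G.dist x y := by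
  obtain ⟨q, hq, hlen⟩ := hG.connected.exists_path_of_dist x y
  rw [← hlen, Subtype.mk.inj ((hG.isAcyclic.subsingleton_path x y).elim ⟨p, hp⟩ ⟨q, hq⟩)]

lemma dist_add_dist_of_mem_support {p : G.Walk x y} (hp : p.IsPath) (hc : c ∈ p.support) :
    G.dist x c + G.dist c y = G.dist x y :=
  p.dist_add_dist_of_length_eq_dist (hG.length_eq_dist hp) hc

lemma mem_support_of_dist_add_dist {p : G.Walk x y} (hp : p.IsPath)
    (hc : G.dist x c + G.dist c y = G.dist x y) : c ∈ p.support := by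
  obtain ⟨q₁, hq₁⟩ := hG.connected.exists_walk_length_eq_dist x c
  obtain ⟨q₂, hq₂⟩ := hG.connected.exists_walk_length_eq_dist c y
  have hlen : (q₁.append q₂).length = G.dist x y := by rw [Walk.length_append]; omega
  have hpath := (q₁.append q₂).isPath_of_length_eq_dist hlen
  rw [Subtype.mk.inj ((hG.isAcyclic.subsingleton_path x y).elim ⟨p, hp⟩ ⟨_, hpath⟩)]
  exact (q₁.append q₂).mem_support_iff_exists_append.mpr ⟨q₁, q₂, rfl⟩

lemma exists_median (x y a : V) : ∃ c, G.dist x c + G.dist c y = G.dist x y ∧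
    G.dist x c + G.dist c a = G.dist x a ∧ G.dist y c + G.dist c a = G.dist y a := by
  classical
  obtain ⟨p, hp, -⟩ := hG.connected.exists_path_of_dist x y
  obtain ⟨c, hc, hmin⟩ := p.support.toFinset.exists_min_image (G.dist · a)
    ⟨x, by simp⟩
  rw [List.mem_toFinset] at hc
  obtain ⟨r, hr, hrlen⟩ := hG.connected.exists_path_of_dist c a
  -- `c` is the vertex of `p` closest to `a`, so the geodesic from `c` to `a` leaves `p` at once
  have hmeet : ∀ ξ ∈ r.support, ξ ∈ p.support → ξ = c := fun ξ hξr hξp => by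
    have h₁ := r.dist_add_dist_of_length_eq_dist hrlen hξr
    have h₂ := hmin ξ (List.mem_toFinset.mpr hξp)
    exact ((hG.connected.dist_eq_zero_iff).mp (by omega)).symm
  have hbranch : ∀ {z : V} (s : G.Walk z c), s.IsPath → (∀ ξ ∈ s.support, ξ ∈ p.support) →
      G.dist z c + G.dist c a = G.dist z a := fun s hs hsp => by
    have := hG.length_eq_dist (hs.append_of_support_inter hr fun ξ h₁ h₂ => hmeet ξ h₂ (hsp ξ h₁))
    rwa [Walk.length_append, hG.length_eq_dist hs, hrlen] at this
  refine ⟨c, hG.dist_add_dist_of_mem_support hp hc,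
    hbranch _ (hp.takeUntil hc) fun _ h => p.support_takeUntil_subset_support hc h, ?_⟩
  have hc' : c ∈ p.reverse.support := by simpa using hc
  exact hbranch _ (hp.reverse.takeUntil hc') fun ξ h => by
    simpa using p.reverse.support_takeUntil_subset_support hc' h

lemma dist_add_dist_of_between (ha : G.dist x a + G.dist a y = G.dist x y)
    (hb : G.dist x b + G.dist b y = G.dist x y) (hab : G.dist x a ≤ G.dist x b) :
    G.dist x a + G.dist a b = G.dist x b := by
  classical
  obtain ⟨p, hp, -⟩ := hG.connected.exists_path_of_dist x y
  have hbp := hG.mem_support_of_dist_add_dist hp hb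
  have hap := hG.mem_support_of_dist_add_dist hp ha
  rw [← p.take_spec hbp, Walk.mem_support_append_iff] at hap
  rcases hap with hap | hap
  · exact hG.dist_add_dist_of_mem_support (hp.takeUntil hbp) hap
  · have := hG.dist_add_dist_of_mem_support (hp.dropUntil hbp) hap
    have hba : G.dist b a = G.dist a b := dist_comm
    omega

lemma dist_le_max_of_between (hz : G.dist x z + G.dist z y = G.dist x y)
    (hxb : G.dist x b ≤ G.dist x y) (hyb : G.dist y b ≤ G.dist x y) :
    G.dist z b ≤ max (G.dist x z) (G.dist z y) := by
  obtain ⟨c, hcxy, hcx, hcy⟩ := hG.exists_median x y b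
  have htri : G.dist z b ≤ G.dist z c + G.dist c b := hG.connected.dist_triangle
  have hzc : G.dist z c = G.dist c z := dist_comm
  have hyc : G.dist y c = G.dist c y := dist_comm
  rcases le_total (G.dist x c) (G.dist x z) with h | h
  · have := hG.dist_add_dist_of_between hcxy hz h
    omega
  · have := hG.dist_add_dist_of_between hz hcxy h
    omega

lemma exists_ne_forall_dist_le_two [Nontrivial V]
    (h3 : ∀ x y, G.dist x y ≤ 3) : ∃ z₁ z₂, z₁ ≠ z₂ ∧ ∀ b, G.dist z₁ b ≤ 2 ∧ G.dist z₂ b ≤ 2 := by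
  by_cases h : ∃ x y, G.dist x y = 3
  · obtain ⟨x, y, hxy⟩ := h
    obtain ⟨z₁, h₁, h₁'⟩ := (hG.connected x y).exists_dist_eq_of_le (i := 1) (by omega)
    obtain ⟨z₂, h₂, h₂'⟩ := (hG.connected x y).exists_dist_eq_of_le (i := 2) (by omega)
    refine ⟨z₁, z₂, fun h => by rw [h] at h₁; omega, fun b => ⟨?_, ?_⟩⟩
    · have := hG.dist_le_max_of_between (z := z₁) (b := b) (by omega)
        ((h3 x b).trans hxy.ge) ((h3 y b).trans hxy.ge)
      omega
    · have := hG.dist_le_max_of_between (z := z₂) (b := b) (by omega)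
        ((h3 x b).trans hxy.ge) ((h3 y b).trans hxy.ge)
      omega
  · push Not at h
    obtain ⟨z₁, z₂, hne⟩ := exists_pair_ne V
    exact ⟨z₁, z₂, hne, fun b => ⟨by grind, by grind⟩⟩

variable {u w : V} {r : ℕ}

/-- Let `c` be the median of `u`, `y`, `a`, with `j = dist u c` and `t = dist c a`. As `u` is
farthest from `y`, `t ≤ j`; the geodesic from `w` to `a` has length at most `|dist u w - j| + t`,
which yields all three bounds. -/
lemma exists_short_walk (hfar : ∀ b, G.dist y b ≤ G.dist y u)
    (hw : G.dist u w + G.dist w y = G.dist u y) (hm : 2 ≤ G.dist u w)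
    (hmr : G.dist u w + 2 ≤ r) (hmr' : 2 * G.dist u w ≤ r + 1)
    (hua : G.dist u a ≤ r) (hau : a ≠ u) :
    ∃ q : G.Walk w a, q.length + 2 ≤ r ∧ (∀ ξ ∈ q.support, G.dist u ξ ≤ r) ∧ u ∉ q.support := by
  have hconn := hG.connected
  obtain ⟨c, hcuy, hcua, hcya⟩ := hG.exists_median u y a
  have hya := hfar a
  have hyu : G.dist y u = G.dist u y := dist_comm
  have hyc : G.dist y c = G.dist c y := dist_comm
  have hau' : G.dist u a ≠ 0 := fun h => hau ((hconn.dist_eq_zero_iff).mp h).symm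
  have hwc : G.dist u c + G.dist c w = G.dist u w ∨ G.dist u w + G.dist w c = G.dist u c :=
    (le_total (G.dist u c) (G.dist u w)).imp (hG.dist_add_dist_of_between hcuy hw)
      (hG.dist_add_dist_of_between hw hcuy)
  have hwa : G.dist w a ≤ G.dist w c + G.dist c a := hconn.dist_triangle
  have hcw : G.dist c w = G.dist w c := dist_comm
  obtain ⟨q, hq⟩ := hconn.exists_walk_length_eq_dist w a
  refine ⟨q, by omega, fun ξ hξ => ?_, fun hu => ?_⟩
  · have := q.dist_add_dist_of_length_eq_dist hq hξ
    have : G.dist u ξ ≤ G.dist u w + G.dist w ξ := hconn.dist_triangle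
    have : G.dist u ξ ≤ G.dist u a + G.dist a ξ := hconn.dist_triangle
    have : G.dist a ξ = G.dist ξ a := dist_comm
    omega
  · have := q.dist_add_dist_of_length_eq_dist hq hu
    have : G.dist w u = G.dist u w := dist_comm
    omega

end IsTree

end SimpleGraph

namespace SwapGame

section View

variable {V W : Type} {G : SimpleGraph V} {H : SimpleGraph W} {k : ℕ} {u v w a : V}
  {ι : V → W}

lemma mem_ball_iff (hG : G.Connected) : a ∈ ball G u k ↔ G.dist u a ≤ k := by
  change G.edist u a ≤ k ↔ _
  rw [← (hG u a).coe_dist_eq_edist, Nat.cast_le]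

lemma self_mem_ball : u ∈ ball G u k := by
  simp [ball]

lemma pos_of_mem_ball_of_ne (hw : w ∈ ball G u k) (hwu : w ≠ u) : 0 < k := by
  have : (0 : ℕ∞) < k := (G.edist_pos_of_ne hwu.symm).trans_le hw
  exact_mod_cast this

lemma swapGraph_adj_of_ne {x y a b c : W} (h : H.Adj x y) (hx : x ≠ a) (hy : y ≠ a) :
    (swapGraph H a b c).Adj x y := by
  rw [swapGraph, fromEdgeSet_adj]
  refine ⟨Or.inl ⟨h, ?_⟩, h.ne⟩
  rw [Set.mem_singleton_iff, Sym2.eq_iff]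
  rintro (⟨rfl, -⟩ | ⟨-, rfl⟩) <;> contradiction

lemma swapGraph_adj_self {a b c : W} (h : a ≠ c) : (swapGraph H a b c).Adj a c := by
  rw [swapGraph, fromEdgeSet_adj]
  exact ⟨Or.inr rfl, h⟩

lemma edist_swapGraph_le_length {x y a b c : W} (p : H.Walk x y) (hp : a ∉ p.support) :
    (swapGraph H a b c).edist x y ≤ p.length :=
  edist_le_length_of_adj_on (f := id) (s := {a}ᶜ)
    (fun _ hx _ hy h => swapGraph_adj_of_ne h hx hy) p fun _ h ha => hp (ha ▸ h)

namespace Compatible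

variable (hc : Compatible G k u H ι)
include hc

lemma edist_eq (hG : G.Connected) (ha : a ∈ ball G u k) : H.edist (ι u) (ι a) = G.edist u a := by
  obtain ⟨-, -, hinj, hview, hadj⟩ := hc
  obtain ⟨p, hp⟩ := hG.exists_walk_length_eq_edist u a
  have hle : H.edist (ι u) (ι a) ≤ G.edist u a := by
    refine hp ▸ edist_le_length_of_adj_on (fun x hx y hy h => (hadj x hx y hy).mpr h) p
      fun ξ hξ => ?_
    exact (p.edist_le_length_of_mem_support hξ).trans (hp ▸ ha)
  obtain ⟨e, he⟩ := ENat.ne_top_iff_exists.mp (ne_top_of_le_ne_top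
    (edist_ne_top_iff_reachable.mpr (hG u a)) hle)
  obtain ⟨q, hq⟩ := exists_walk_of_edist_eq_coe he.symm
  have hqview : ∀ x ∈ q.support, x ∈ ι '' ball G u k := fun x hx => by
    rw [← hview]
    exact (q.edist_le_length_of_mem_support hx).trans (hq ▸ he ▸ hle.trans ha)
  -- pull `q` back to `G` along a partial inverse of `ι` on the view
  have : Nonempty V := ⟨u⟩
  set g := Function.invFunOn ι (ball G u k)
  have hg : ∀ x ∈ ball G u k, g (ι x) = x := fun x hx => hinj.leftInvOn_invFunOn hx
  have hgmem : ∀ x ∈ ι '' ball G u k, g x ∈ ball G u k ∧ ι (g x) = x := fun x hx =>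
    ⟨Function.invFunOn_mem hx, Function.invFunOn_eq hx⟩
  have hpull := edist_le_length_of_adj_on (G := H) (H := G) (f := g) (s := ι '' ball G u k)
    (fun x hx y hy h => by
      rw [← hadj _ (hgmem x hx).1 _ (hgmem y hy).1, (hgmem x hx).2, (hgmem y hy).2]
      exact h) q hqview
  rw [hg u self_mem_ball, hg a ha, hq] at hpull
  exact le_antisymm hle (he ▸ hpull)

lemma edist_swapGraph_le_of_walk {a b : V} (q : G.Walk a b)
    (hq : ∀ ξ ∈ q.support, ξ ∈ ball G u k) (hqu : u ∉ q.support) {x y : W} :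
    (swapGraph H (ι u) x y).edist (ι a) (ι b) ≤ q.length := by
  obtain ⟨-, -, hinj, -, hadj⟩ := hc
  have hne : ∀ ξ ∈ ball G u k, ξ ≠ u → ι ξ ≠ ι u := fun ξ hξ hξu h =>
    hξu (hinj hξ self_mem_ball h)
  exact edist_le_length_of_adj_on (s := {ξ | ξ ∈ ball G u k ∧ ξ ≠ u})
    (fun ξ hξ η hη h => swapGraph_adj_of_ne ((hadj ξ hξ.1 η hη.1).mpr h)
      (hne ξ hξ.1 hξ.2) (hne η hη.1 hη.2)) q fun ξ h => ⟨hq ξ h, fun e => hqu (e ▸ h)⟩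

/-- Route from `u` over the new edge to `w`, then inside the view to the vertex `ι b` where a
geodesic from `u` to `z` leaves the view, then along that geodesic: it avoids `u`, so it survives
the swap. -/
lemma edist_swapGraph_le (hw : w ∈ ball G u k) (hwu : w ≠ u) {r : ℕ}
    (hwalk : ∀ a ∈ ball G u k, a ≠ u → ∃ q : G.Walk w a, q.length + 2 ≤ r ∧
      (∀ ξ ∈ q.support, ξ ∈ ball G u k) ∧ u ∉ q.support) (z : W) :
    (swapGraph H (ι u) (ι v) (ι w)).edist (ι u) z ≤ (r - 1 + (H.dist (ι u) z - k) : ℕ) := by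
  by_cases hz : z = ι u
  · simp [hz]
  have hH := hc.2.1
  have hk := pos_of_mem_ball_of_ne hw hwu
  have hD := hH.pos_dist_of_ne (Ne.symm hz)
  obtain ⟨y, hy, hyz⟩ := (hH (ι u) z).exists_dist_eq_of_le (min_le_left (H.dist (ι u) z) k)
  have hyview : y ∈ ι '' ball G u k := by
    rw [← hc.2.2.2.1, Set.mem_ofPred_eq, ← (hH _ _).coe_dist_eq_edist, hy]
    exact_mod_cast min_le_right _ _
  obtain ⟨b, hb, rfl⟩ := hyview
  have hbu : b ≠ u := by
    rintro rfl
    simp only [dist_self] at hy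
    omega
  obtain ⟨q, hqlen, hqball, hqu⟩ := hwalk b hb hbu
  obtain ⟨π, hπ⟩ := (hH (ι b) z).exists_walk_length_eq_dist
  have hπu : ι u ∉ π.support := fun h => by
    have := π.dist_add_dist_of_length_eq_dist hπ h
    have : H.dist (ι b) (ι u) = H.dist (ι u) (ι b) := dist_comm
    omega
  have huw : ι u ≠ ι w := fun h => hwu (hc.2.2.1 hw self_mem_ball h.symm)
  calc _ ≤ _ + _ := SimpleGraph.edist_triangle
    _ ≤ _ + _ + _ := add_le_add_left SimpleGraph.edist_triangle _
    _ ≤ 1 + q.length + π.length := by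
      gcongr
      · exact (edist_eq_one_iff_adj.mpr (swapGraph_adj_self huw)).le
      · exact hc.edist_swapGraph_le_of_walk q hqball hqu
      · exact edist_swapGraph_le_length π hπu
    _ ≤ _ := by exact_mod_cast (by omega)

end Compatible

theorem unhappyMaxVia_of_forall_exists_walk (hG : G.Connected) (hswap : ValidSwap G k u v w)
    {r : ℕ} (hrk : r ≤ k) {a₀ : V} (ha₀ : G.dist u a₀ = r)
    (hwalk : ∀ a ∈ ball G u k, a ≠ u → ∃ q : G.Walk w a, q.length + 2 ≤ r ∧
      (∀ ξ ∈ q.support, ξ ∈ ball G u k) ∧ u ∉ q.support) :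
    UnhappyMaxVia G k u v w := by
  refine ⟨hswap, fun W H ι hc => ?_⟩
  have hw : w ∈ ball G u k := hswap.2.1
  have hwu : w ≠ u := hswap.2.2.2
  have hH := hc.2.1
  have := hc.1
  obtain ⟨z₀, hz₀⟩ := H.exists_edist_eq_eccent_of_finite (ι u)
  set s := H.dist (ι u) z₀
  have hs : H.eccent (ι u) = s := by rw [(hH _ _).coe_dist_eq_edist, hz₀]
  have hDs : ∀ z, H.dist (ι u) z ≤ s := fun z => by
    have := hs ▸ (hH _ _).coe_dist_eq_edist ▸ H.edist_le_eccent (u := ι u) (v := z)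
    exact_mod_cast this
  have ha₀b : a₀ ∈ ball G u k := (mem_ball_iff hG).mpr (ha₀ ▸ hrk)
  have hrs : r ≤ s := by
    have := hc.edist_eq hG ha₀b
    rw [← (hH _ _).coe_dist_eq_edist, ← (hG _ _).coe_dist_eq_edist, ha₀, Nat.cast_inj] at this
    exact this ▸ hDs (ι a₀)
  have hk := pos_of_mem_ball_of_ne hw hwu
  have hs₁ : 0 < s := (hH.pos_dist_of_ne fun h => hwu (hc.2.2.1 hw self_mem_ball h.symm)).trans_le
    (hDs (ι w))
  have hnew : (swapGraph H (ι u) (ι v) (ι w)).eccent (ι u) ≤ (s - 1 : ℕ) :=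
    (eccent_le_iff _ _).mpr fun z => (hc.edist_swapGraph_le hw hwu hwalk z).trans <| by
      have := hDs z
      exact_mod_cast (by omega)
  change _ < H.eccent (ι u)
  rw [hs]
  exact hnew.trans_lt (by exact_mod_cast (by omega : s - 1 < s))

end View

theorem MaxEquilibrium.dist_le_three [Finite V] {T : SimpleGraph V} (hT : T.IsTree)
    (hk : 4 ≤ k) (heq : MaxEquilibrium T k) (x y : V) : T.dist x y ≤ 3 := by
  by_contra! hxy
  have hconn := hT.connected
  have : Nonempty V := ⟨x⟩
  obtain ⟨⟨u, y'⟩, hmax⟩ := Finite.exists_max fun p : V × V => T.dist p.1 p.2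
  replace hmax : ∀ a b, T.dist a b ≤ T.dist u y' := fun a b => hmax (a, b)
  have hd : 4 ≤ T.dist u y' := hxy.trans_le (hmax x y)
  obtain ⟨r, hr⟩ : ∃ r, r = min (T.dist u y') k := ⟨_, rfl⟩
  obtain ⟨v, hv, -⟩ := (hconn u y').exists_dist_eq_of_le (i := 1) (by omega)
  obtain ⟨w, hw, hwy⟩ := (hconn u y').exists_dist_eq_of_le (i := (r + 1) / 2) (by omega)
  obtain ⟨a₀, ha₀, -⟩ := (hconn u y').exists_dist_eq_of_le (i := r) (by omega)
  have hswap : ValidSwap T k u v w := by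
    refine ⟨dist_eq_one_iff_adj.mp hv, (mem_ball_iff hconn).mpr (by omega), fun h => ?_, ?_⟩
    · rw [← dist_eq_one_iff_adj] at h
      omega
    · rintro rfl
      simp at hw
      omega
  refine heq u ⟨v, w, unhappyMaxVia_of_forall_exists_walk hconn hswap (by omega) ha₀
    fun a ha hau => ?_⟩
  have hua : T.dist u a ≤ r := hr ▸ le_min (hmax u a) ((mem_ball_iff hconn).mp ha)
  obtain ⟨q, hq, hball, hu⟩ := hT.exists_short_walk (w := w)
    (fun b => (hmax y' b).trans_eq dist_comm) (by omega) (by omega) (by omega) (by omega) hua hau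
  exact ⟨q, hq, fun ξ hξ => (mem_ball_iff hconn).mpr ((hball ξ hξ).trans (by omega)), hu⟩

section SocialCost

open Finset

variable {V : Type} [Fintype V] {T : SimpleGraph V}

lemma one_le_sup_dist [Nontrivial V] (hT : T.Connected) (z : V) : 1 ≤ univ.sup (T.dist z) := by
  obtain ⟨y, hy⟩ := exists_ne z
  exact (hT.pos_dist_of_ne hy.symm).trans_le (le_sup (mem_univ y))

lemma scMax_eq_two (hT : T.Connected) (hV : Fintype.card V = 2) : scMax T = 2 := by
  have : Nontrivial V := Fintype.one_lt_card_iff_nontrivial.mp (by omega)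
  have hecc (z : V) : univ.sup (T.dist z) = 1 := by
    refine le_antisymm (Finset.sup_le fun y _ => ?_) (one_le_sup_dist hT z)
    have := hT.dist_lt_card z y
    omega
  simp [scMax, hecc, hV]

lemma scMax_le_three_mul_card_sub_two [Nontrivial V] (hT : T.IsTree) (h3 : ∀ x y, T.dist x y ≤ 3) :
    scMax T ≤ 3 * Fintype.card V - 2 := by
  classical
  obtain ⟨z₁, z₂, hne, h₂⟩ := hT.exists_ne_forall_dist_le_two h3
  have hz₂ : z₂ ∈ univ.erase z₁ := mem_erase.mpr ⟨hne.symm, mem_univ _⟩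
  have hrest : ∑ z ∈ (univ.erase z₁).erase z₂, univ.sup (T.dist z) ≤
      ((univ.erase z₁).erase z₂).card * 3 := by
    simpa using sum_le_card_nsmul _ _ 3 fun z _ => Finset.sup_le fun b _ => h3 z b
  rw [card_erase_of_mem hz₂, card_erase_of_mem (mem_univ _), card_univ] at hrest
  have h₁ : univ.sup (T.dist z₁) ≤ 2 := Finset.sup_le fun b _ => (h₂ b).1
  have h₂ : univ.sup (T.dist z₂) ≤ 2 := Finset.sup_le fun b _ => (h₂ b).2
  have := Fintype.one_lt_card (α := V)
  rw [scMax, ← add_sum_erase _ _ (mem_univ z₁), ← add_sum_erase _ _ hz₂]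
  omega

lemma two_mul_card_sub_one_le_scMax (hT : T.IsTree) (hV : 3 ≤ Fintype.card V) :
    2 * Fintype.card V - 1 ≤ scMax T := by
  classical
  have : Nontrivial V := Fintype.one_lt_card_iff_nontrivial.mp (by omega)
  obtain ⟨z₀, -, hz₀⟩ := exists_min_image univ (fun z => univ.sup (T.dist z)) univ_nonempty
  -- two distinct vertices of eccentricity one would span a triangle with any third vertex
  have hecc : ∀ z ∈ univ.erase z₀, 2 ≤ univ.sup (T.dist z) := fun z hz => by
    by_contra! h
    obtain ⟨z₃, hz₃⟩ : ((univ.erase z₀).erase z).Nonempty := by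
      rw [← card_pos, card_erase_of_mem hz, card_erase_of_mem (mem_univ _), card_univ]
      omega
    simp only [mem_erase, mem_univ, and_true] at hz hz₃
    have hdist : ∀ a b, univ.sup (T.dist a) ≤ 1 → a ≠ b → T.dist a b = 1 := fun a b ha hab =>
      le_antisymm ((le_sup (mem_univ b)).trans ha) (hT.connected.pos_dist_of_ne hab)
    have h₀ := (hz₀ z (mem_univ z)).trans (by omega : univ.sup (T.dist z) ≤ 1)
    exact hT.dist_ne_of_adj z₀ (dist_eq_one_iff_adj.mp (hdist z z₃ (by omega) hz₃.1.symm))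
      ((hdist z₀ z h₀ hz.symm).trans (hdist z₀ z₃ h₀ (Ne.symm hz₃.2)).symm)
  have hrest : (univ.erase z₀).card * 2 ≤ ∑ z ∈ univ.erase z₀, univ.sup (T.dist z) := by
    simpa using card_nsmul_le_sum _ _ 2 hecc
  rw [card_erase_of_mem (mem_univ _), card_univ] at hrest
  have := one_le_sup_dist hT.connected z₀
  rw [scMax, ← add_sum_erase _ _ (mem_univ z₀)]
  omega

end SocialCost

lemma PoA_le_div {n : ℕ} {P : SimpleGraph (Fin n) → Prop} {sc : SimpleGraph (Fin n) → ℕ}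
    {A B : ℕ} (hA : 0 < A) (hB : ∀ T, T.IsTree → P T → sc T ≤ B)
    (hA' : ∀ T, T.IsTree → A ≤ sc T) : PoA n P sc ≤ B / A := by
  have hsup : sSup {m | ∃ T, T.IsTree ∧ P T ∧ sc T = m} ≤ B :=
    csSup_le' (by rintro _ ⟨T, hT, hP, rfl⟩; exact hB T hT hP)
  rcases Set.eq_empty_or_nonempty {m | ∃ T : SimpleGraph (Fin n), T.IsTree ∧ sc T = m} with h | h
  · rw [PoA, h, Nat.sInf_empty, Nat.cast_zero, div_zero]
    positivity
  · have hinf : A ≤ sInf {m | ∃ T : SimpleGraph (Fin n), T.IsTree ∧ sc T = m} :=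
      le_csInf h (by rintro _ ⟨T, hT, rfl⟩; exact hA' T hT)
    exact div_le_div₀ (by positivity) (by exact_mod_cast hsup) (by exact_mod_cast hA)
      (by exact_mod_cast hinf)

theorem stmt13 (k : ℕ) (hk : 4 ≤ k) (n : ℕ) (hn : 2 ≤ n) :
    (∀ T : SimpleGraph (Fin n), T.IsTree → MaxEquilibrium T k →
      ∀ x y : Fin n, T.edist x y ≤ 3) ∧
    PoA n (fun T => MaxEquilibrium T k) scMax ≤ 3 / 2 := by
  have hdiam (T : SimpleGraph (Fin n)) (hT : T.IsTree) (heq : MaxEquilibrium T k) (x y : Fin n) :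
      T.dist x y ≤ 3 :=
    MaxEquilibrium.dist_le_three hT hk heq x y
  refine ⟨fun T hT heq x y => ?_, ?_⟩
  · rw [← (hT.connected x y).coe_dist_eq_edist]
    exact_mod_cast hdiam T hT heq x y
  rcases hn.eq_or_lt with rfl | hn
  · have h2 (T : SimpleGraph (Fin 2)) (hT : T.IsTree) : scMax T = 2 :=
      scMax_eq_two hT.connected (Fintype.card_fin 2)
    calc _ ≤ ((2 : ℕ) : ℚ) / (2 : ℕ) :=
          PoA_le_div two_pos (fun T hT _ => (h2 T hT).le) fun T hT => (h2 T hT).ge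
      _ ≤ 3 / 2 := by norm_num
  · have : Nontrivial (Fin n) := Fin.nontrivial_iff_two_le.mpr hn.le
    calc _ ≤ ((3 * n - 2 : ℕ) : ℚ) / (2 * n - 1 : ℕ) :=
          PoA_le_div (by omega)
            (fun T hT heq => by simpa using scMax_le_three_mul_card_sub_two hT (hdiam T hT heq))
            fun T hT => by simpa using two_mul_card_sub_one_le_scMax hT (by simp; omega)
      _ ≤ 3 / 2 := by
          rw [div_le_div_iff₀ (by exact_mod_cast (by omega : 0 < 2 * n - 1)) two_pos]
          exact_mod_cast (by omega : (3 * n - 2) * 2 ≤ 3 * (2 * n - 1))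

end SwapGame
end

section
/- For every k ≥ 3 and every m ≥ 2, there exist a tree G_0 on n = 2m + 3 vertices and a finite sequence G_0, G_1, …, G_T of trees with T ≥ 1 and G_T = G_0 (as labeled graphs on the same vertex set) in which each G_{t+1} is obtained from G_t by a single edge swap performed by a player that is weakly pessimistically unhappy in G_t with respect to the SUM-cost with k-local information via that swap; the same statement holds with respect to the MAX-cost. In particular, for every k ≥ 3 there are infinitely many trees from which the SUM swap game and the MAX swap game by weakly pessimistic players with k-local information admit best response cycles, so these games do not have the finite improvement property on trees. -/
open SimpleGraph

namespace SwapGame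

lemma leaf_edist {W : Type} (H : SimpleGraph W) (u v : W)
    (huv : H.Adj u v) (hN : ∀ x, H.Adj u x → x = v) {x : W} (hx : x ≠ u) :
    H.edist u x = 1 + (H.deleteEdges {s(u, v)}).edist v x := by
  classical
  apply le_antisymm
  · calc H.edist u x ≤ H.edist u v + H.edist v x := SimpleGraph.edist_triangle
      _ ≤ 1 + (H.deleteEdges {s(u, v)}).edist v x :=
          add_le_add (by simpa using edist_le huv.toWalk)
            (edist_anti (deleteEdges_le _))
  · by_cases htop : H.edist u x = ⊤
    · rw [htop]; exact le_top
    · obtain ⟨p, hp⟩ := exists_walk_of_edist_ne_top htop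
      have key : ∀ (q : H.Walk u x), q.IsPath →
          1 + (H.deleteEdges {s(u, v)}).edist v x ≤ q.length := by
        intro q hq
        cases q with
        | nil => exact absurd rfl hx
        | cons h q₂ =>
          rename_i y
          obtain rfl : v = y := (hN _ h).symm
          rw [Walk.cons_isPath_iff] at hq
          have hsub : ∀ e ∈ q₂.edges, e ∈ (H.deleteEdges {s(u, v)}).edgeSet := by
            intro e he
            rw [edgeSet_deleteEdges]
            refine ⟨q₂.edges_subset_edgeSet he, ?_⟩
            intro hev
            rw [Set.mem_singleton_iff] at hev
            subst hev
            exact hq.2 (q₂.fst_mem_support_of_mem_edges he)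
          have h2 := edist_le (q₂.transfer _ hsub)
          rw [Walk.length_transfer] at h2
          calc 1 + (H.deleteEdges {s(u, v)}).edist v x ≤ 1 + (q₂.length : ℕ∞) :=
                add_le_add_right h2 1
            _ = ((Walk.cons h q₂).length : ℕ∞) := by
                rw [Walk.length_cons]; push_cast; ring
      calc 1 + (H.deleteEdges {s(u, v)}).edist v x ≤ (p.bypass.length : ℕ∞) :=
            key _ p.bypass_isPath
        _ ≤ (p.length : ℕ∞) := by exact_mod_cast p.length_bypass_le
        _ = H.edist u x := hp

lemma nbr_edist {W : Type} (K : SimpleGraph W) (v w : W)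
    (h : ∀ y, K.Adj v y → K.Adj w y) {x : W} (hx : x ≠ v) :
    K.edist w x ≤ K.edist v x := by
  by_cases htop : K.edist v x = ⊤
  · rw [htop]; exact le_top
  · obtain ⟨p, hp⟩ := exists_walk_of_edist_ne_top htop
    rw [← hp]
    cases p with
    | nil => exact absurd rfl hx
    | cons h₁ p₂ =>
      have h3 := edist_le (Walk.cons (h _ h₁) p₂)
      simpa using h3





lemma adj_edist_le_one_s14 {V : Type} {G : SimpleGraph V} {x y : V} (h : G.Adj x y) :
    G.edist x y ≤ 1 := by
  simpa using SimpleGraph.edist_le h.toWalk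

lemma pass_through {V : Type} {G : SimpleGraph V} {u v x : V}
    (hN : ∀ z, G.Adj u z → z = x) (p : G.Walk u v) (huv : u ≠ v) : x ∈ p.support := by
  cases p with
  | nil => exact absurd rfl huv
  | cons h q =>
    rename_i z
    obtain rfl : z = x := hN _ h
    rw [Walk.support_cons]
    exact List.mem_cons_of_mem _ q.start_mem_support

def v0 (m : ℕ) : Fin (2*m+3) := ⟨0, by omega⟩
def v1 (m : ℕ) : Fin (2*m+3) := ⟨1, by omega⟩

def starE (m : ℕ) : Set (Sym2 (Fin (2*m+3))) :=
  {e | ∃ x : Fin (2*m+3), 2 ≤ x.val ∧ e = s(v1 m, x)}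

def Es (m : ℕ) (a : Fin (2*m+3)) : Set (Sym2 (Fin (2*m+3))) :=
  insert s(v0 m, a) (starE m)

def Gr (m : ℕ) (a : Fin (2*m+3)) : SimpleGraph (Fin (2*m+3)) :=
  fromEdgeSet (Es m a)

variable {m : ℕ} {a b : Fin (2*m+3)}

lemma val_v0 : (v0 m).val = 0 := rfl
lemma val_v1 : (v1 m).val = 1 := rfl

lemma gr_adj_iff {x y : Fin (2*m+3)} :
    (Gr m a).Adj x y ↔ (s(x,y) = s(v0 m, a) ∨ ∃ t : Fin (2*m+3), 2 ≤ t.val ∧ s(x,y) = s(v1 m, t)) ∧ x ≠ y := by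
  rw [Gr, fromEdgeSet_adj]
  simp [Es, starE, Set.mem_insert_iff]

lemma adj_0a (ha : 2 ≤ a.val) : (Gr m a).Adj (v0 m) a := by
  rw [gr_adj_iff]
  refine ⟨Or.inl rfl, ?_⟩
  intro h; have := congrArg Fin.val h; rw [val_v0] at this; omega

lemma adj_1x {x : Fin (2*m+3)} (hx : 2 ≤ x.val) : (Gr m a).Adj (v1 m) x := by
  rw [gr_adj_iff]
  refine ⟨Or.inr ⟨x, hx, rfl⟩, ?_⟩
  intro h; have := congrArg Fin.val h; rw [val_v1] at this; omega

lemma nbr_0 (ha : 2 ≤ a.val) {x : Fin (2*m+3)} (h : (Gr m a).Adj (v0 m) x) : x = a := by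
  rw [gr_adj_iff] at h
  rcases h.1 with he | ⟨t, ht, he⟩
  · rcases Sym2.eq_iff.mp he with ⟨_, rfl⟩ | ⟨h1, rfl⟩
    · rfl
    · exfalso; have := congrArg Fin.val h1; rw [val_v0] at this; omega
  · exfalso
    rcases Sym2.eq_iff.mp he with ⟨h1, _⟩ | ⟨h1, _⟩ <;>
      (have := congrArg Fin.val h1; rw [val_v0] at this)
    · rw [val_v1] at this; omega
    · omega

lemma nbr_a (ha : 2 ≤ a.val) {x : Fin (2*m+3)} (h : (Gr m a).Adj a x) : x = v0 m ∨ x = v1 m := by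
  rw [gr_adj_iff] at h
  rcases h.1 with he | ⟨t, ht, he⟩
  · rcases Sym2.eq_iff.mp he with ⟨h1, _⟩ | ⟨_, rfl⟩
    · exfalso; have := congrArg Fin.val h1; rw [val_v0] at this; omega
    · exact Or.inl rfl
  · rcases Sym2.eq_iff.mp he with ⟨h1, _⟩ | ⟨_, rfl⟩
    · exfalso; have := congrArg Fin.val h1; rw [val_v1] at this; omega
    · exact Or.inr rfl

lemma nbr_1 {x : Fin (2*m+3)} (ha : 2 ≤ a.val) (h : (Gr m a).Adj (v1 m) x) : 2 ≤ x.val := by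
  rw [gr_adj_iff] at h
  rcases h.1 with he | ⟨t, ht, he⟩
  · rcases Sym2.eq_iff.mp he with ⟨h1, _⟩ | ⟨h1, rfl⟩
    · exfalso; have := congrArg Fin.val h1; rw [val_v1, val_v0] at this; omega
    · exfalso
      have := congrArg Fin.val h1; rw [val_v1] at this; omega
  · rcases Sym2.eq_iff.mp he with ⟨_, rfl⟩ | ⟨h1, rfl⟩
    · exact ht
    · exact absurd rfl h.2
lemma nbr_other {x y : Fin (2*m+3)} (hx : 2 ≤ x.val) (hxa : x ≠ a)
    (h : (Gr m a).Adj x y) : y = v1 m := by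
  rw [gr_adj_iff] at h
  rcases h.1 with he | ⟨t, ht, he⟩
  · exfalso
    rcases Sym2.eq_iff.mp he with ⟨h1, _⟩ | h2
    · have := congrArg Fin.val h1; rw [val_v0] at this; omega
    · exact hxa h2.1
  · rcases Sym2.eq_iff.mp he with ⟨h1, _⟩ | ⟨_, rfl⟩
    · exfalso; have := congrArg Fin.val h1; rw [val_v1] at this; omega
    · rfl

lemma not_adj_0b (ha : 2 ≤ a.val) (hab : b ≠ a) : ¬ (Gr m a).Adj (v0 m) b :=
  fun h => hab (nbr_0 ha h)


lemma edgeSet_gr (ha : 2 ≤ a.val) : (Gr m a).edgeSet = Es m a := by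
  rw [Gr, edgeSet_fromEdgeSet]
  ext e
  simp only [Set.mem_diff, Set.mem_setOf_eq, and_iff_left_iff_imp]
  intro he hd
  rcases he with rfl | he
  · rw [Sym2.mem_diagSet, Sym2.mk_isDiag_iff] at hd
    have := congrArg Fin.val hd; rw [val_v0] at this; omega
  · obtain ⟨x, hx, rfl⟩ := he
    rw [Sym2.mem_diagSet, Sym2.mk_isDiag_iff] at hd
    have := congrArg Fin.val hd; rw [val_v1] at this; omega

lemma s0a_not_mem_star (ha : 2 ≤ a.val) : s(v0 m, a) ∉ starE m := by
  rintro ⟨x, hx, he⟩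
  rcases Sym2.eq_iff.mp he with ⟨h1, _⟩ | ⟨_, h2⟩
  · have := congrArg Fin.val h1; rw [val_v0, val_v1] at this; omega
  · have := congrArg Fin.val h2; rw [val_v1] at this; omega

lemma swap_gr (ha : 2 ≤ a.val) (hb : 2 ≤ b.val) :
    swapGraph (Gr m a) (v0 m) a b = Gr m b := by
  rw [swapGraph, edgeSet_gr ha, Es, Set.insert_diff_self_of_notMem (s0a_not_mem_star ha),
    Set.union_singleton]
  rfl

lemma gr_connected (ha : 2 ≤ a.val) : (Gr m a).Connected := by
  rw [connected_iff]
  refine ⟨?_, ⟨v0 m⟩⟩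
  have key : ∀ z : Fin (2*m+3), (Gr m a).Reachable z (v1 m) := by
    intro z
    rcases Nat.lt_or_ge z.val 2 with h2 | h2
    · rcases Nat.lt_or_ge z.val 1 with h1 | h1
      · have hz : z = v0 m := Fin.ext (by rw [val_v0]; omega)
        subst hz
        exact (adj_0a ha).reachable.trans ((adj_1x ha).symm.reachable)
      · have hz : z = v1 m := Fin.ext (by rw [val_v1]; omega)
        subst hz
        exact Reachable.refl _
    · exact (adj_1x h2).symm.reachable
  intro x y
  exact (key x).trans (key y).symm

lemma gr_edist_le (ha : 2 ≤ a.val) (y : Fin (2*m+3)) :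
    (Gr m a).edist (v0 m) y ≤ 3 := by
  have h1 : (Gr m a).edist (v0 m) a ≤ 1 := adj_edist_le_one_s14 (adj_0a ha)
  have h2 : (Gr m a).edist a (v1 m) ≤ 1 := adj_edist_le_one_s14 (adj_1x (a := a) ha).symm
  rcases Nat.lt_or_ge y.val 2 with hy | hy
  · rcases Nat.lt_or_ge y.val 1 with hy1 | hy1
    · have : y = v0 m := Fin.ext (by rw [val_v0]; omega)
      subst this
      simp [SimpleGraph.edist_self]
    · have : y = v1 m := Fin.ext (by rw [val_v1]; omega)
      subst this
      calc (Gr m a).edist (v0 m) (v1 m) ≤ _ + _ := SimpleGraph.edist_triangle (v := a)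
        _ ≤ 1 + 1 := add_le_add h1 h2
        _ ≤ 3 := by norm_num
  · have h3 : (Gr m a).edist (v1 m) y ≤ 1 := adj_edist_le_one_s14 (adj_1x (a := a) hy)
    calc (Gr m a).edist (v0 m) y ≤ _ + _ := SimpleGraph.edist_triangle (v := v1 m)
      _ ≤ ((Gr m a).edist (v0 m) a + (Gr m a).edist a (v1 m)) + 1 :=
          add_le_add (SimpleGraph.edist_triangle (v := a)) h3
      _ ≤ (1 + 1) + 1 := by exact add_le_add_left (add_le_add h1 h2) 1
      _ ≤ 3 := by norm_num

lemma list_const_nodup {α : Type*} {l : List α} {x : α}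
    (h : ∀ e ∈ l, e = x) (hn : l.Nodup) : l.length ≤ 1 := by
  match l with
  | [] => simp
  | [e] => simp
  | e :: f :: t =>
    exfalso
    rw [List.nodup_cons] at hn
    exact hn.1 (by rw [h e (by simp), h f (by simp)]; simp)

lemma gr_acyclic (ha : 2 ≤ a.val) : (Gr m a).IsAcyclic := by
  intro v c hc
  have hz1 : (v1 m) ∈ c.support := by
    by_contra hz1
    have hall : ∀ e ∈ c.edges, e = s(v0 m, a) := by
      intro e he
      have heE : e ∈ Es m a := by
        rw [← edgeSet_gr ha]; exact c.edges_subset_edgeSet he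
      rcases heE with rfl | hst
      · rfl
      · obtain ⟨x, hx, rfl⟩ := hst
        exact absurd (c.fst_mem_support_of_mem_edges he) hz1
    have hlen := hc.three_le_length
    have hle := list_const_nodup hall hc.isCircuit.isTrail.edges_nodup
    rw [Walk.length_edges] at hle
    omega
  have hc' := hc.rotate hz1
  set c' := c.rotate (v1 m) hz1 with hc'def
  clear_value c'
  clear hc hc'def hz1
  have hlen := hc'.three_le_length
  cases c' with
  | nil => simp at hlen
  | cons h p =>
    rename_i y
    rw [Walk.cons_isCycle_iff] at hc'
    have hy2 : 2 ≤ y.val := nbr_1 ha h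
    rw [Walk.length_cons] at hlen
    obtain ⟨hp, hedge⟩ := hc'
    cases p with
    | nil => exact h.ne rfl
    | cons h₂ p₂ =>
      rename_i y₂
      rw [Walk.cons_isPath_iff] at hp
      rw [Walk.length_cons] at hlen
      by_cases hya : y = a
      · subst hya
        rcases nbr_a ha h₂ with h0 | h0
        · subst h0
          exact hp.2 (pass_through (fun z hz => nbr_0 ha hz) p₂
            (by intro hh; have := congrArg Fin.val hh; rw [val_v0, val_v1] at this; omega))
        · subst h0
          rw [(Walk.isPath_iff_eq_nil (p := p₂)).mp hp.1, Walk.length_nil] at hlen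
          omega
      · have h0 : y₂ = v1 m := nbr_other hy2 hya h₂
        subst h0
        rw [(Walk.isPath_iff_eq_nil (p := p₂)).mp hp.1, Walk.length_nil] at hlen
        omega


lemma master_pointwise {W : Type} [DecidableEq W] (H : SimpleGraph W) (u v w c : W)
    (huv : H.Adj u v) (hvc : H.Adj v c) (hwc : H.Adj w c)
    (hnuw : ¬ H.Adj u w) (hwu : w ≠ u) (hcu : c ≠ u) (hcw : c ≠ w) (hvw : v ≠ w)
    (hNu : ∀ x, H.Adj u x → x = v) (hNv : ∀ x, H.Adj v x → x = u ∨ x = c) :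
    ∀ x : W, (swapGraph H u v w).edist u (Equiv.swap v w x) ≤ H.edist u x := by
  have hvu : v ≠ u := huv.ne'
  have hK : (swapGraph H u v w).deleteEdges {s(u, w)} = H.deleteEdges {s(u, v)} := by
    ext x y
    simp only [deleteEdges_adj, swapGraph, fromEdgeSet_adj, Set.mem_union, Set.mem_diff,
      Set.mem_singleton_iff, mem_edgeSet]
    constructor
    · rintro ⟨⟨⟨ha, hne⟩ | he, hxy⟩, hnw⟩
      · exact ⟨ha, hne⟩
      · exact absurd he hnw
    · rintro ⟨ha, hne⟩
      have hnw : s(x, y) ≠ s(u, w) := by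
        intro he
        rcases Sym2.eq_iff.mp he with ⟨rfl, rfl⟩ | ⟨rfl, rfl⟩
        · exact hnuw ha
        · exact hnuw ha.symm
      exact ⟨⟨Or.inl ⟨ha, hne⟩, ha.ne⟩, hnw⟩
  have hH'uw : (swapGraph H u v w).Adj u w := by
    rw [swapGraph, fromEdgeSet_adj]
    exact ⟨Or.inr rfl, hwu.symm⟩
  have hNu' : ∀ x, (swapGraph H u v w).Adj u x → x = w := by
    intro x hx
    rw [swapGraph, fromEdgeSet_adj] at hx
    rcases hx.1 with ⟨ha, hne⟩ | he
    · exact absurd (congrArg (fun t => s(u, t)) (hNu x (H.mem_edgeSet.mp ha))) hne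
    · exact Sym2.congr_right.mp he
  have hKvw : ∀ y, (H.deleteEdges {s(u, v)}).Adj v y → (H.deleteEdges {s(u, v)}).Adj w y := by
    intro y hy
    rw [deleteEdges_adj] at hy
    obtain ⟨ha, hne⟩ := hy
    rcases hNv y ha with rfl | rfl
    · exact absurd (Set.mem_singleton_iff.mpr Sym2.eq_swap) hne
    · rw [deleteEdges_adj]
      refine ⟨hwc, ?_⟩
      simp only [Set.mem_singleton_iff]
      intro he
      rcases Sym2.eq_iff.mp he with ⟨rfl, rfl⟩ | ⟨rfl, rfl⟩
      · exact hwu rfl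
      · exact hcu rfl
  intro x
  by_cases hxu : x = u
  · subst hxu
    rw [Equiv.swap_apply_of_ne_of_ne hvu.symm hwu.symm]
    simp [SimpleGraph.edist_self]
  · have hσu : Equiv.swap v w x ≠ u := by
      intro hh
      apply hxu
      have := congrArg (Equiv.swap v w) hh
      rwa [Equiv.swap_apply_self, Equiv.swap_apply_of_ne_of_ne hvu.symm hwu.symm] at this
    rw [leaf_edist (swapGraph H u v w) u w hH'uw hNu' hσu, hK,
      leaf_edist H u v huv hNu hxu]
    refine add_le_add_right ?_ 1
    by_cases hxv : x = v
    · subst hxv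
      rw [Equiv.swap_apply_left]
      simp [SimpleGraph.edist_self]
    · by_cases hxw : x = w
      · subst hxw
        rw [Equiv.swap_apply_right]
        exact le_of_eq SimpleGraph.edist_comm
      · rw [Equiv.swap_apply_of_ne_of_ne hxv hxw]
        exact nbr_edist _ v w hKvw hxv

lemma master_sum {W : Type} [DecidableEq W] [Finite W] (H : SimpleGraph W) (u v w c : W)
    (huv : H.Adj u v) (hvc : H.Adj v c) (hwc : H.Adj w c)
    (hnuw : ¬ H.Adj u w) (hwu : w ≠ u) (hcu : c ≠ u) (hcw : c ≠ w) (hvw : v ≠ w) 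
    (hNu : ∀ x, H.Adj u x → x = v) (hNv : ∀ x, H.Adj v x → x = u ∨ x = c) :
    cSum (swapGraph H u v w) u ≤ cSum H u := by
  have := Fintype.ofFinite W
  unfold cSum
  rw [tsum_fintype, tsum_fintype,
    ← Equiv.sum_comp (Equiv.swap v w) (fun x => (swapGraph H u v w).edist u x)]
  exact Finset.sum_le_sum fun x _ =>
    master_pointwise H u v w c huv hvc hwc hnuw hwu hcu hcw hvw hNu hNv x

lemma master_max {W : Type} [DecidableEq W] (H : SimpleGraph W) (u v w c : W)
    (huv : H.Adj u v) (hvc : H.Adj v c) (hwc : H.Adj w c)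
    (hnuw : ¬ H.Adj u w) (hwu : w ≠ u) (hcu : c ≠ u) (hcw : c ≠ w) (hvw : v ≠ w)
    (hNu : ∀ x, H.Adj u x → x = v) (hNv : ∀ x, H.Adj v x → x = u ∨ x = c) :
    cMax (swapGraph H u v w) u ≤ cMax H u := by
  unfold cMax
  rw [← (Equiv.swap v w).iSup_comp (g := fun x => (swapGraph H u v w).edist u x)]
  exact iSup_mono fun x =>
    master_pointwise H u v w c huv hvc hwc hnuw hwu hcu hcw hvw hNu hNv x


lemma gr_weak (k : ℕ) (hk : 3 ≤ k) {m : ℕ} {a b : Fin (2*m+3)}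
    (ha : 2 ≤ a.val) (hb : 2 ≤ b.val) (hab : a ≠ b) :
    WeakUnhappySumVia (Gr m a) k (v0 m) a b ∧ WeakUnhappyMaxVia (Gr m a) k (v0 m) a b := by
  have hk3 : (3 : ℕ∞) ≤ (k : ℕ∞) := by exact_mod_cast hk
  have hball : ball (Gr m a) (v0 m) k = Set.univ := by
    ext y
    simp only [ball, Set.mem_setOf_eq, Set.mem_univ, iff_true]
    exact le_trans (gr_edist_le ha y) hk3
  have hvalid : ValidSwap (Gr m a) k (v0 m) a b := by
    refine ⟨adj_0a ha, le_trans (gr_edist_le ha b) hk3, not_adj_0b ha hab.symm, ?_⟩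
    intro h; have := congrArg Fin.val h; rw [val_v0] at this; omega
  have main : ∀ (W : Type) (H : SimpleGraph W) (ι : Fin (2*m+3) → W),
      Compatible (Gr m a) k (v0 m) H ι →
      cSum (swapGraph H (ι (v0 m)) (ι a) (ι b)) (ι (v0 m)) ≤ cSum H (ι (v0 m)) ∧
      cMax (swapGraph H (ι (v0 m)) (ι a) (ι b)) (ι (v0 m)) ≤ cMax H (ι (v0 m)) := by
    intro W H ι hcomp
    obtain ⟨hfin, hconn, hinj, hb2, hadj⟩ := hcomp
    haveI := hfin
    haveI := Classical.decEq W
    rw [hball] at hinj hb2 hadj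
    rw [Set.image_univ] at hb2
    have hinj' : Function.Injective ι := fun x y hxy =>
      hinj (Set.mem_univ x) (Set.mem_univ y) hxy
    have hadj' : ∀ p q : Fin (2*m+3), H.Adj (ι p) (ι q) ↔ (Gr m a).Adj p q :=
      fun p q => hadj p (Set.mem_univ p) q (Set.mem_univ q)
    have hne : ∀ p q : Fin (2*m+3), p.val ≠ q.val → ι p ≠ ι q :=
      fun p q hpq h => hpq (congrArg Fin.val (hinj' h))
    have huv : H.Adj (ι (v0 m)) (ι a) := (hadj' _ _).mpr (adj_0a ha)
    have hvc : H.Adj (ι a) (ι (v1 m)) := (hadj' _ _).mpr (adj_1x (a := a) ha).symm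
    have hwc : H.Adj (ι b) (ι (v1 m)) := (hadj' _ _).mpr (adj_1x (a := a) hb).symm
    have hnuw : ¬ H.Adj (ι (v0 m)) (ι b) := fun h =>
      not_adj_0b ha hab.symm ((hadj' _ _).mp h)
    have hwu : ι b ≠ ι (v0 m) := hne _ _ (by rw [val_v0]; omega)
    have hcu : ι (v1 m) ≠ ι (v0 m) := hne _ _ (by rw [val_v0, val_v1]; omega)
    have hcw : ι (v1 m) ≠ ι b := hne _ _ (by rw [val_v1]; omega)
    have hvw : ι a ≠ ι b := fun h => hab (hinj' h)
    have hNu : ∀ x, H.Adj (ι (v0 m)) x → x = ι a := by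
      intro x hx
      have hxr : x ∈ Set.range ι := by
        rw [← hb2]
        show H.edist (ι (v0 m)) x ≤ (k : ℕ∞)
        exact le_trans (adj_edist_le_one_s14 hx) (le_trans (by norm_num) hk3)
      obtain ⟨y, rfl⟩ := hxr
      exact congrArg ι (nbr_0 ha ((hadj' _ _).mp hx))
    have hNv : ∀ x, H.Adj (ι a) x → x = ι (v0 m) ∨ x = ι (v1 m) := by
      intro x hx
      have hxr : x ∈ Set.range ι := by
        rw [← hb2]
        show H.edist (ι (v0 m)) x ≤ (k : ℕ∞)
        calc H.edist (ι (v0 m)) x ≤ H.edist (ι (v0 m)) (ι a) + H.edist (ι a) x :=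
              SimpleGraph.edist_triangle
          _ ≤ 1 + 1 := add_le_add (adj_edist_le_one_s14 huv) (adj_edist_le_one_s14 hx)
          _ ≤ (k : ℕ∞) := le_trans (by norm_num) hk3
      obtain ⟨y, rfl⟩ := hxr
      rcases nbr_a ha ((hadj' _ _).mp hx) with h0 | h0
      · exact Or.inl (congrArg ι h0)
      · exact Or.inr (congrArg ι h0)
    exact ⟨master_sum H (ι (v0 m)) (ι a) (ι b) (ι (v1 m)) huv hvc hwc hnuw hwu hcu hcw hvw hNu hNv,
      master_max H (ι (v0 m)) (ι a) (ι b) (ι (v1 m)) huv hvc hwc hnuw hwu hcu hcw hvw hNu hNv⟩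
  exact ⟨⟨hvalid, fun W H ι hc => (main W H ι hc).1⟩,
    ⟨hvalid, fun W H ι hc => (main W H ι hc).2⟩⟩

theorem stmt14 (k : ℕ) (hk : 3 ≤ k) (m : ℕ) (hm : 2 ≤ m) :
    (∃ (T : ℕ) (Gs : ℕ → SimpleGraph (Fin (2 * m + 3))),
      1 ≤ T ∧ (∀ t ≤ T, (Gs t).IsTree) ∧ Gs T = Gs 0 ∧
      ∀ t < T, ∃ u v w, WeakUnhappySumVia (Gs t) k u v w ∧
        Gs (t + 1) = swapGraph (Gs t) u v w) ∧
    (∃ (T : ℕ) (Gs : ℕ → SimpleGraph (Fin (2 * m + 3))),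
      1 ≤ T ∧ (∀ t ≤ T, (Gs t).IsTree) ∧ Gs T = Gs 0 ∧
      ∀ t < T, ∃ u v w, WeakUnhappyMaxVia (Gs t) k u v w ∧
        Gs (t + 1) = swapGraph (Gs t) u v w) := by
  set A : Fin (2*m+3) := ⟨2, by omega⟩ with hAdef
  set B : Fin (2*m+3) := ⟨3, by omega⟩ with hBdef
  have hA : 2 ≤ A.val := le_of_eq rfl
  have hB : 2 ≤ B.val := Nat.le_succ_of_le (le_of_eq rfl)
  have hAB : A ≠ B := by
    intro h
    have h2 : (2 : ℕ) = 3 := congrArg Fin.val h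
    omega
  have hswap1 : swapGraph (Gr m A) (v0 m) A B = Gr m B := swap_gr hA hB
  have hswap2 : swapGraph (Gr m B) (v0 m) B A = Gr m A := swap_gr hB hA
  have htreeA : (Gr m A).IsTree := ⟨gr_connected hA, gr_acyclic hA⟩
  have htreeB : (Gr m B).IsTree := ⟨gr_connected hB, gr_acyclic hB⟩
  have hGs : ∀ t : ℕ, (fun t => if t % 2 = 0 then Gr m A else Gr m B) t =
      if t % 2 = 0 then Gr m A else Gr m B := fun t => rfl
  constructor
  · refine ⟨2, fun t => if t % 2 = 0 then Gr m A else Gr m B, one_le_two, ?_, by norm_num, ?_⟩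
    · intro t _
      by_cases h : t % 2 = 0 <;> simp [h, htreeA, htreeB]
    · intro t ht
      interval_cases t
      · exact ⟨v0 m, A, B, (gr_weak k hk hA hB hAB).1, by norm_num [hswap1]⟩
      · exact ⟨v0 m, B, A, (gr_weak k hk hB hA hAB.symm).1, by norm_num [hswap2]⟩
  · refine ⟨2, fun t => if t % 2 = 0 then Gr m A else Gr m B, one_le_two, ?_, by norm_num, ?_⟩
    · intro t _
      by_cases h : t % 2 = 0 <;> simp [h, htreeA, htreeB]
    · intro t ht
      interval_cases t
      · exact ⟨v0 m, A, B, (gr_weak k hk hA hB hAB).2, by norm_num [hswap1]⟩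
      · exact ⟨v0 m, B, A, (gr_weak k hk hB hA hAB.symm).2, by norm_num [hswap2]⟩


end SwapGame
end

section
/- Let G be a tree on at least three vertices and let k = 2. A weakly pessimistic player u with 2-local information is unhappy in G with respect to the SUM-cost if and only if there exists a path u v w in G such that the degree of v in G is two; the same characterization holds with respect to the MAX-cost. -/
open SimpleGraph

namespace SwapGame

variable {V : Type}


lemma swap_adj {G : SimpleGraph V} {u v w : V} (huw : u ≠ w) (x y : V) :
    (swapGraph G u v w).Adj x y ↔ ((G.Adj x y ∧ s(x,y) ≠ s(u,v)) ∨ s(x,y) = s(u,w)) := by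
  unfold swapGraph
  rw [fromEdgeSet_adj]
  constructor
  · rintro ⟨(⟨h1, h2⟩ | h1), hne⟩
    · exact Or.inl ⟨h1, h2⟩
    · exact Or.inr h1
  · rintro (⟨h1, h2⟩ | h1)
    · exact ⟨Or.inl ⟨h1, h2⟩, h1.ne⟩
    · refine ⟨Or.inr h1, ?_⟩
      rw [Sym2.eq_iff] at h1
      rcases h1 with ⟨rfl, rfl⟩ | ⟨rfl, rfl⟩
      · exact huw
      · exact huw.symm

lemma le_edist_of_lipschitz {W : Type} {H : SimpleGraph W} {f : W → ℕ∞}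
    (hf : ∀ a b, H.Adj a b → f b ≤ f a + 1) {x : W} (hx : f x = 0) (y : W) :
    f y ≤ H.edist x y := by
  have key : ∀ (a b : W) (p : H.Walk a b), f b ≤ f a + p.length := by
    intro a b p
    induction p with
    | nil => simp
    | @cons a c b h q ih =>
      calc f b ≤ f c + q.length := ih
        _ ≤ (f a + 1) + q.length := by gcongr; exact hf _ _ h
        _ = f a + (q.length + 1 : ℕ) := by push_cast; ring
        _ = f a + (Walk.cons h q).length := by rw [Walk.length_cons]
  rw [edist_eq_sInf]
  refine le_sInf ?_
  rintro e ⟨p, rfl⟩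
  simpa [hx] using key x y p

lemma reachable_transfer {W : Type} {A B : SimpleGraph W}
    (h : ∀ a b, A.Adj a b → B.Reachable a b) {x y : W} (hr : A.Reachable x y) :
    B.Reachable x y := by
  obtain ⟨p⟩ := hr
  induction p with
  | nil => exact Reachable.refl _
  | cons ha q ih => exact (h _ _ ha).trans ih

lemma edist_hom_le {W : Type} {G : SimpleGraph V} {H : SimpleGraph W} (f : G →g H) (x y : V) :
    H.edist (f x) (f y) ≤ G.edist x y := by
  rw [edist_eq_sInf (G := G)]
  refine le_sInf ?_
  rintro e ⟨p, rfl⟩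
  simpa using edist_le (p.map f)

lemma edist_le_two_cases {G : SimpleGraph V} {x y : V} (h : G.edist x y ≤ 2) :
    x = y ∨ G.Adj x y ∨ ∃ m, G.Adj x m ∧ G.Adj m y := by
  have hne : G.edist x y ≠ ⊤ := by
    intro ht; rw [ht] at h; exact absurd h (by simp)
  obtain ⟨p, hp⟩ := exists_walk_of_edist_ne_top hne
  have hl : p.length ≤ 2 := by
    have := hp.le.trans h
    exact_mod_cast this
  cases p with
  | nil => exact Or.inl rfl
  | cons h1 q =>
    cases q with
    | nil => exact Or.inr (Or.inl h1)
    | cons h2 r =>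
      cases r with
      | nil => exact Or.inr (Or.inr ⟨_, h1, h2⟩)
      | cons h3 s => simp [Walk.length_cons] at hl

lemma tree_no_triangle {G : SimpleGraph V} (hG : G.IsTree) {x y z : V}
    (h1 : G.Adj x y) (h2 : G.Adj y z) : ¬ G.Adj x z := by
  intro h3
  have hw1 : (Walk.cons h3 Walk.nil : G.Walk x z).IsPath := by simp [Walk.isPath_def, h3.ne]
  have hw2 : (Walk.cons h1 (Walk.cons h2 Walk.nil) : G.Walk x z).IsPath := by
    simp [Walk.isPath_def, h1.ne, h2.ne, h3.ne]
  have heq := hG.IsAcyclic.path_unique ⟨_, hw1⟩ ⟨_, hw2⟩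
  rw [Subtype.mk.injEq] at heq
  have hlen := congrArg Walk.length heq
  simp [Walk.length_cons] at hlen

lemma tree_mid_unique {G : SimpleGraph V} (hG : G.IsTree) {x m a v : V} (hxa : x ≠ a)
    (h1 : G.Adj x m) (h2 : G.Adj m a) (h3 : G.Adj x v) (h4 : G.Adj v a) : m = v := by
  have hw1 : (Walk.cons h1 (Walk.cons h2 Walk.nil) : G.Walk x a).IsPath := by
    simp [Walk.isPath_def, h1.ne, h2.ne, hxa]
  have hw2 : (Walk.cons h3 (Walk.cons h4 Walk.nil) : G.Walk x a).IsPath := by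
    simp [Walk.isPath_def, h3.ne, h4.ne, hxa]
  have heq := hG.IsAcyclic.path_unique ⟨_, hw1⟩ ⟨_, hw2⟩
  rw [Subtype.mk.injEq] at heq
  have hsup := congrArg Walk.support heq
  simp [Walk.support_cons] at hsup
  exact hsup

lemma enat_eq_two {e : ℕ∞} (h2 : e ≤ 2) (h0 : e ≠ 0) (h1 : e ≠ 1) : e = 2 := by
  lift e to ℕ using (by intro ht; rw [ht] at h2; exact absurd h2 (by decide) : e ≠ ⊤)
  have h2' : (e : ℕ) ≤ 2 := by exact_mod_cast h2
  have h0' : (e : ℕ) ≠ 0 := by exact_mod_cast h0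
  have h1' : (e : ℕ) ≠ 1 := by exact_mod_cast h1
  exact_mod_cast (by omega : e = 2)

lemma edist_le_card {G : SimpleGraph V} [Fintype V] (h : G.Connected) (x y : V) :
    G.edist x y ≤ (Fintype.card V : ℕ∞) := by
  classical
  obtain ⟨p⟩ := h x y
  have h2 : p.toPath.1.length ≤ Fintype.card V := (p.toPath.2.length_lt).le
  calc G.edist x y ≤ (p.toPath.1.length : ℕ∞) := edist_le _
    _ ≤ (Fintype.card V : ℕ∞) := by exact_mod_cast h2

lemma exists_pred {W : Type} {H : SimpleGraph W} {x y : W} (hxy : x ≠ y) (p : H.Walk x y) :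
    ∃ (z : W) (q : H.Walk x z), H.Adj z y ∧ q.length + 1 ≤ p.length := by
  induction p with
  | nil => exact absurd rfl hxy
  | @cons a b c h q ih =>
    by_cases hbc : b = c
    · subst hbc; exact ⟨a, Walk.nil, h, by simp [Walk.length_cons]⟩
    · obtain ⟨z, r, hz, hl⟩ := ih hbc
      exact ⟨z, Walk.cons h r, hz, by simp [Walk.length_cons]; omega⟩

lemma swap_edist_le {G : SimpleGraph V} (hG : G.IsTree) {u v w : V}
    (huv : G.Adj u v) (hvw : G.Adj v w) (huw : u ≠ w)
    (hNv : ∀ b, G.Adj v b → b = u ∨ b = w)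
    {W : Type} {H : SimpleGraph W} {ι : V → W} (hc : Compatible G 2 u H ι) :
    (∀ x, x ≠ ι v → (swapGraph H (ι u) (ι v) (ι w)).edist (ι u) x ≤ H.edist (ι u) x) ∧
    (swapGraph H (ι u) (ι v) (ι w)).edist (ι u) (ι v) ≤ 2 ∧
    (swapGraph H (ι u) (ι v) (ι w)).edist (ι u) (ι w) ≤ 1 ∧
    H.edist (ι u) (ι v) = 1 ∧ H.edist (ι u) (ι w) = 2 ∧ ι v ≠ ι w := by
  obtain ⟨hFin, hConn, hInj, hBall, hAdj⟩ := hc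
  have hu' : u ∈ ball G u 2 := by simp [ball, edist_self]
  have hv' : v ∈ ball G u 2 := by
    simp only [ball, Set.mem_setOf_eq, edist_eq_one_iff_adj.mpr huv]; decide
  have hw' : w ∈ ball G u 2 := by
    simpa [ball] using edist_le (Walk.cons huv (Walk.cons hvw Walk.nil))
  have hιuv : ι u ≠ ι v := fun h => huv.ne (hInj hu' hv' h)
  have hιuw : ι u ≠ ι w := fun h => huw (hInj hu' hw' h)
  have hιvw : ι v ≠ ι w := fun h => hvw.ne (hInj hv' hw' h)
  have hAuv : H.Adj (ι u) (ι v) := (hAdj u hu' v hv').mpr huv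
  have hAvw : H.Adj (ι v) (ι w) := (hAdj v hv' w hw').mpr hvw
  have hnuw : ¬ H.Adj (ι u) (ι w) := fun h => (tree_no_triangle hG huv hvw) ((hAdj u hu' w hw').mp h)
  have hd1 : H.edist (ι u) (ι v) = 1 := edist_eq_one_iff_adj.mpr hAuv
  have hd2 : H.edist (ι u) (ι w) = 2 := by
    refine enat_eq_two ?_ ?_ ?_
    · simpa using edist_le (Walk.cons hAuv (Walk.cons hAvw Walk.nil))
    · exact fun h => hιuw (edist_eq_zero_iff.mp h)
    · exact fun h => hnuw (edist_eq_one_iff_adj.mp h)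
  have hNH : ∀ z, H.Adj (ι v) z → z = ι u ∨ z = ι w := by
    intro z hz
    have hz2 : H.edist (ι u) z ≤ 2 := by
      calc H.edist (ι u) z ≤ H.edist (ι u) (ι v) + H.edist (ι v) z := SimpleGraph.edist_triangle
        _ = 1 + 1 := by rw [hd1, edist_eq_one_iff_adj.mpr hz]
        _ = 2 := by decide
    have hmem : z ∈ ι '' ball G u 2 := by rw [← hBall]; exact hz2
    obtain ⟨b, hb, rfl⟩ := hmem
    have hb' := (hAdj v hv' b hb).mp hz
    rcases hNv b hb' with rfl | rfl
    · exact Or.inl rfl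
    · exact Or.inr rfl
  have hH'uw : (swapGraph H (ι u) (ι v) (ι w)).Adj (ι u) (ι w) :=
    (swap_adj hιuw _ _).mpr (Or.inr rfl)
  have hH'wv : (swapGraph H (ι u) (ι v) (ι w)).Adj (ι w) (ι v) := by
    refine (swap_adj hιuw _ _).mpr (Or.inl ⟨hAvw.symm, ?_⟩)
    intro hcon
    rw [Sym2.eq_iff] at hcon
    rcases hcon with ⟨h1, -⟩ | ⟨-, h2⟩
    · exact hιuw h1.symm
    · exact hιuv h2.symm
  have hd'w : (swapGraph H (ι u) (ι v) (ι w)).edist (ι u) (ι w) ≤ 1 :=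
    le_of_eq (edist_eq_one_iff_adj.mpr hH'uw)
  have hd'v : (swapGraph H (ι u) (ι v) (ι w)).edist (ι u) (ι v) ≤ 2 := by
    simpa using edist_le (Walk.cons hH'uw (Walk.cons hH'wv Walk.nil))
  have main : ∀ (n : ℕ) (x : W), x ≠ ι v → H.edist (ι u) x = n →
      (swapGraph H (ι u) (ι v) (ι w)).edist (ι u) x ≤ n := by
    intro n
    induction n using Nat.strong_induction_on with
    | _ n ih =>
      intro x hxv hx
      by_cases hxu : x = ι u
      · subst hxu; simp [SimpleGraph.edist_self]
      by_cases hxw : x = ι w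
      · subst hxw
        rw [hd2] at hx
        have hn : n = 2 := by exact_mod_cast hx.symm
        subst hn
        exact hd'w.trans (by decide)
      have hreach : H.Reachable (ι u) x := hConn.preconnected _ _
      obtain ⟨p, hp⟩ := hreach.exists_walk_length_eq_edist
      have hpl : p.length = n := by rw [hx] at hp; exact_mod_cast hp
      obtain ⟨z, q, hz, hl⟩ := exists_pred (fun h => hxu h.symm) p
      have hzv : z ≠ ι v := by
        rintro rfl
        rcases hNH x hz with rfl | rfl
        · exact hxu rfl
        · exact hxw rfl
      have hzt : H.edist (ι u) z ≠ ⊤ := edist_ne_top_iff_reachable.mpr (hConn.preconnected _ _)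
      have hzq : H.edist (ι u) z ≤ (q.length : ℕ∞) := edist_le q
      lift H.edist (ι u) z to ℕ using hzt with k hk
      have hkq' : k ≤ q.length := by exact_mod_cast hzq
      have hpl' : q.length + 1 ≤ n := hpl ▸ hl
      have hkn : k < n := by omega
      have hih := ih k hkn z hzv hk.symm
      have hedge : (swapGraph H (ι u) (ι v) (ι w)).Adj z x := by
        refine (swap_adj hιuw _ _).mpr (Or.inl ⟨hz, ?_⟩)
        intro hcon
        rw [Sym2.eq_iff] at hcon
        rcases hcon with ⟨-, h2⟩ | ⟨h1, -⟩
        · exact hxv h2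
        · exact hzv h1
      have htri : (swapGraph H (ι u) (ι v) (ι w)).edist (ι u) x ≤
          (swapGraph H (ι u) (ι v) (ι w)).edist (ι u) z +
          (swapGraph H (ι u) (ι v) (ι w)).edist z x := SimpleGraph.edist_triangle
      rw [edist_eq_one_iff_adj.mpr hedge] at htri
      calc (swapGraph H (ι u) (ι v) (ι w)).edist (ι u) x
          ≤ (swapGraph H (ι u) (ι v) (ι w)).edist (ι u) z + 1 := htri
        _ ≤ (k : ℕ∞) + 1 := by gcongr
        _ ≤ (n : ℕ∞) := by exact_mod_cast Nat.succ_le_of_lt hkn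
  refine ⟨?_, hd'v, hd'w, hd1, hd2, hιvw⟩
  intro x hxv
  have ht : H.edist (ι u) x ≠ ⊤ := edist_ne_top_iff_reachable.mpr (hConn.preconnected _ _)
  obtain ⟨n, hn⟩ := WithTop.ne_top_iff_exists.mp ht
  rw [← hn]
  exact main n x hxv hn.symm

lemma weak_of_deg2 {G : SimpleGraph V} (hG : G.IsTree) {u v w : V}
    (huv : G.Adj u v) (hvw : G.Adj v w) (huw : u ≠ w)
    (hNv : ∀ b, G.Adj v b → b = u ∨ b = w) :
    WeakUnhappySumVia G 2 u v w ∧ WeakUnhappyMaxVia G 2 u v w := by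
  have hval : ValidSwap G 2 u v w :=
    ⟨huv, by simpa using edist_le (Walk.cons huv (Walk.cons hvw Walk.nil)),
      fun h => tree_no_triangle hG huv hvw h, fun h => huw h.symm⟩
  constructor <;> refine ⟨hval, ?_⟩ <;> intro W H ι hc
  · -- SUM
    obtain ⟨hmain, hv2, hw1, hd1, hd2, hιvw⟩ := swap_edist_le hG huv hvw huw hNv hc
    have : Finite W := hc.1
    have : Fintype W := Fintype.ofFinite W
    classical
    rw [cSum, cSum, tsum_fintype, tsum_fintype]
    rw [← Finset.add_sum_erase Finset.univ ((swapGraph H (ι u) (ι v) (ι w)).edist (ι u))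
          (Finset.mem_univ (ι v)),
        ← Finset.add_sum_erase Finset.univ (H.edist (ι u)) (Finset.mem_univ (ι v))]
    have hwmem : ι w ∈ Finset.univ.erase (ι v) := by
      simp [Finset.mem_erase, hιvw.symm]
    rw [← Finset.add_sum_erase _ ((swapGraph H (ι u) (ι v) (ι w)).edist (ι u)) hwmem,
        ← Finset.add_sum_erase _ (H.edist (ι u)) hwmem]
    have hS : ∑ x ∈ (Finset.univ.erase (ι v)).erase (ι w),
        (swapGraph H (ι u) (ι v) (ι w)).edist (ι u) x ≤
        ∑ x ∈ (Finset.univ.erase (ι v)).erase (ι w), H.edist (ι u) x := by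
      refine Finset.sum_le_sum fun x hx => ?_
      exact hmain x (Finset.mem_erase.mp (Finset.mem_erase.mp hx).2).1
    calc (swapGraph H (ι u) (ι v) (ι w)).edist (ι u) (ι v) +
          ((swapGraph H (ι u) (ι v) (ι w)).edist (ι u) (ι w) +
            ∑ x ∈ (Finset.univ.erase (ι v)).erase (ι w),
              (swapGraph H (ι u) (ι v) (ι w)).edist (ι u) x)
        ≤ 2 + (1 + ∑ x ∈ (Finset.univ.erase (ι v)).erase (ι w), H.edist (ι u) x) := by
          gcongr
      _ = 1 + (2 + ∑ x ∈ (Finset.univ.erase (ι v)).erase (ι w), H.edist (ι u) x) := by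
          ring
      _ = H.edist (ι u) (ι v) + (H.edist (ι u) (ι w) +
            ∑ x ∈ (Finset.univ.erase (ι v)).erase (ι w), H.edist (ι u) x) := by
          rw [hd1, hd2]
  · -- MAX
    obtain ⟨hmain, hv2, hw1, hd1, hd2, hιvw⟩ := swap_edist_le hG huv hvw huw hNv hc
    rw [cMax, cMax]
    refine iSup_le fun x => ?_
    by_cases hxv : x = ι v
    · subst hxv
      calc (swapGraph H (ι u) (ι v) (ι w)).edist (ι u) (ι v) ≤ 2 := hv2
        _ = H.edist (ι u) (ι w) := hd2.symm
        _ ≤ ⨆ y, H.edist (ι u) y := le_iSup _ _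
    · exact (hmain x hxv).trans (le_iSup _ x)

lemma self_compatible {G : SimpleGraph V} [Fintype V] (hG : G.Connected) (u : V) :
    Compatible G 2 u G id := by
  refine ⟨Finite.of_fintype V, hG, Set.injOn_id _, ?_, fun a _ b _ => Iff.rfl⟩
  rw [Set.image_id]
  rfl

lemma swap_disconnect {G : SimpleGraph V} (hG : G.IsTree) {u v w : V}
    (huv : G.Adj u v) (hvw : ¬ G.Adj v w) (hedw : G.edist u w ≤ 2)
    (hnuw : ¬ G.Adj u w) (hwu : w ≠ u) :
    (swapGraph G u v w).edist u v = ⊤ := by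
  rcases edist_le_two_cases hedw with h | h | ⟨m, hum, hmw⟩
  · exact absurd h.symm hwu
  · exact absurd h hnuw
  · have hmv : m ≠ v := fun h => hvw (h ▸ hmw)
    have hDadj : ∀ a b : V, G.Adj a b → s(a,b) ≠ s(u,v) →
        (G \ fromEdgeSet {s(u,v)}).Adj a b := by
      intro a b h1 h2
      rw [sdiff_adj]
      refine ⟨h1, ?_⟩
      rw [fromEdgeSet_adj]
      rintro ⟨h3, -⟩
      exact h2 (by simpa using h3)
    have hDum : (G \ fromEdgeSet {s(u,v)}).Adj u m := by
      refine hDadj u m hum ?_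
      intro h
      rw [Sym2.eq_iff] at h
      rcases h with ⟨-, h⟩ | ⟨h, -⟩
      · exact hmv h
      · exact huv.ne h
    have hDmw : (G \ fromEdgeSet {s(u,v)}).Adj m w := by
      refine hDadj m w hmw ?_
      intro h
      rw [Sym2.eq_iff] at h
      rcases h with ⟨h1, h2⟩ | ⟨h1, -⟩
      · exact hum.ne' h1
      · exact hmv h1
    have hreachuw : (G \ fromEdgeSet {s(u,v)}).Reachable u w :=
      hDum.reachable.trans hDmw.reachable
    have htrans : ∀ a b, (swapGraph G u v w).Adj a b →
        (G \ fromEdgeSet {s(u,v)}).Reachable a b := by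
      intro a b hab
      rw [swap_adj hwu.symm] at hab
      rcases hab with ⟨h1, h2⟩ | hs
      · exact (hDadj a b h1 h2).reachable
      · rw [Sym2.eq_iff] at hs
        rcases hs with ⟨rfl, rfl⟩ | ⟨rfl, rfl⟩
        · exact hreachuw
        · exact hreachuw.symm
    have hbridge : ¬ (G \ fromEdgeSet {s(u,v)}).Reachable u v :=
      (isBridge_iff.mp (isAcyclic_iff_forall_edge_isBridge.mp hG.IsAcyclic
        (G.mem_edgeSet.mpr huv)))
    refine edist_eq_top_of_not_reachable ?_
    intro hr
    exact hbridge (reachable_transfer htrans hr)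


def extGraph (G : SimpleGraph V) (a : V) (L : ℕ) : SimpleGraph (V ⊕ Fin L) where
  Adj x y := match x, y with
    | Sum.inl x, Sum.inl y => G.Adj x y
    | Sum.inl x, Sum.inr i => x = a ∧ (i : ℕ) = 0
    | Sum.inr i, Sum.inl y => y = a ∧ (i : ℕ) = 0
    | Sum.inr i, Sum.inr j => (i : ℕ) + 1 = j ∨ (j : ℕ) + 1 = i
  symm := by
    constructor
    rintro (x|i) (y|j) h
    · exact h.symm
    · exact h
    · exact h
    · rcases h with h | h
      · exact Or.inr h
      · exact Or.inl h
  loopless := by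
    constructor
    rintro (x|i) h
    · exact G.irrefl h
    · rcases h with h | h <;> omega

@[simp] lemma extGraph_adj_inl_inl {G : SimpleGraph V} {a : V} {L : ℕ} {x y : V} :
    (extGraph G a L).Adj (Sum.inl x) (Sum.inl y) ↔ G.Adj x y := Iff.rfl

@[simp] lemma extGraph_adj_inl_inr {G : SimpleGraph V} {a : V} {L : ℕ} {x : V} {i : Fin L} :
    (extGraph G a L).Adj (Sum.inl x) (Sum.inr i) ↔ x = a ∧ (i : ℕ) = 0 := Iff.rfl

@[simp] lemma extGraph_adj_inr_inl {G : SimpleGraph V} {a : V} {L : ℕ} {y : V} {i : Fin L} :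
    (extGraph G a L).Adj (Sum.inr i) (Sum.inl y) ↔ y = a ∧ (i : ℕ) = 0 := Iff.rfl

@[simp] lemma extGraph_adj_inr_inr {G : SimpleGraph V} {a : V} {L : ℕ} {i j : Fin L} :
    (extGraph G a L).Adj (Sum.inr i) (Sum.inr j) ↔ (i : ℕ) + 1 = j ∨ (j : ℕ) + 1 = i := Iff.rfl

def inlHom (G : SimpleGraph V) (a : V) (L : ℕ) : G →g extGraph G a L :=
  ⟨Sum.inl, fun h => h⟩

lemma ext_reach {G : SimpleGraph V} (hG : G.Connected) (a : V) (L : ℕ) (z : V ⊕ Fin L) :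
    (extGraph G a L).Reachable (Sum.inl a) z := by
  cases z with
  | inl x => exact (hG a x).map (inlHom G a L)
  | inr i =>
    have key : ∀ (k : ℕ) (hk : k < L),
        (extGraph G a L).Reachable (Sum.inl a) (Sum.inr ⟨k, hk⟩) := by
      intro k
      induction k with
      | zero => exact fun hk => Adj.reachable (by simp)
      | succ k ihk =>
        intro hk
        refine (ihk (by omega)).trans (Adj.reachable ?_)
        simp
    obtain ⟨k, hk⟩ := i
    exact key k hk

lemma ext_connected {G : SimpleGraph V} (hG : G.Connected) (a : V) (L : ℕ) :
    (extGraph G a L).Connected := by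
  have : Nonempty (V ⊕ Fin L) := ⟨Sum.inl a⟩
  exact ⟨fun x y => (ext_reach hG a L x).symm.trans (ext_reach hG a L y)⟩

lemma ext_new_le {G : SimpleGraph V} (a : V) {L : ℕ} (i : Fin L) :
    (extGraph G a L).edist (Sum.inl a) (Sum.inr i) ≤ ((1 + (i : ℕ) : ℕ) : ℕ∞) := by
  have key : ∀ (k : ℕ) (hk : k < L),
      (extGraph G a L).edist (Sum.inl a) (Sum.inr ⟨k, hk⟩) ≤ ((1 + k : ℕ) : ℕ∞) := by
    intro k
    induction k with
    | zero =>
      intro hk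
      have : (extGraph G a L).Adj (Sum.inl a) (Sum.inr ⟨0, hk⟩) := by simp
      rw [edist_eq_one_iff_adj.mpr this]
      exact_mod_cast le_refl _
    | succ k ihk =>
      intro hk
      have hadj : (extGraph G a L).Adj (Sum.inr ⟨k, by omega⟩) (Sum.inr ⟨k+1, hk⟩) := by simp
      calc (extGraph G a L).edist (Sum.inl a) (Sum.inr ⟨k+1, hk⟩)
          ≤ (extGraph G a L).edist (Sum.inl a) (Sum.inr ⟨k, by omega⟩) +
            (extGraph G a L).edist (Sum.inr ⟨k, by omega⟩) (Sum.inr ⟨k+1, hk⟩) :=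
            SimpleGraph.edist_triangle
        _ ≤ ((1 + k : ℕ) : ℕ∞) + 1 := by
            gcongr
            · exact ihk _
            · exact le_of_eq (edist_eq_one_iff_adj.mpr hadj)
        _ = ((1 + (k+1) : ℕ) : ℕ∞) := by push_cast; ring
  obtain ⟨k, hk⟩ := i
  exact key k hk

def extCost {L : ℕ} (e2 : ℕ∞) (g : V → ℕ∞) : V ⊕ Fin L → ℕ∞ := fun x =>
  match x with
  | Sum.inl b => g b
  | Sum.inr i => e2 + 1 + ((i : ℕ) : ℕ∞)

@[simp] lemma extCost_inl {L : ℕ} (e2 : ℕ∞) (g : V → ℕ∞) (b : V) :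
    extCost (L := L) e2 g (Sum.inl b) = g b := rfl

@[simp] lemma extCost_inr {L : ℕ} (e2 : ℕ∞) (g : V → ℕ∞) (i : Fin L) :
    extCost (L := L) e2 g (Sum.inr i) = e2 + 1 + ((i : ℕ) : ℕ∞) := rfl

lemma extCost_lipschitz {L : ℕ} {G₀ : SimpleGraph V} {u₀ a : V} {e2 : ℕ∞}
    (he : G₀.edist u₀ a = e2)
    {H₀ : SimpleGraph (V ⊕ Fin L)}
    (hadj : ∀ x y : V, H₀.Adj (Sum.inl x) (Sum.inl y) → G₀.Adj x y)
    (hmix : ∀ (x : V) (i : Fin L), H₀.Adj (Sum.inl x) (Sum.inr i) → x = a ∧ (i : ℕ) = 0)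
    (hmix' : ∀ (y : V) (i : Fin L), H₀.Adj (Sum.inr i) (Sum.inl y) → y = a ∧ (i : ℕ) = 0)
    (hpath : ∀ i j : Fin L, H₀.Adj (Sum.inr i) (Sum.inr j) →
      (i : ℕ) + 1 = j ∨ (j : ℕ) + 1 = i) :
    ∀ p q, H₀.Adj p q → extCost e2 (G₀.edist u₀) q ≤ extCost e2 (G₀.edist u₀) p + 1 := by
  intro p q hpq
  cases p with
  | inl x =>
    cases q with
    | inl y =>
      have hG := hadj x y hpq
      have htri : G₀.edist u₀ y ≤ G₀.edist u₀ x + G₀.edist x y := SimpleGraph.edist_triangle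
      rw [edist_eq_one_iff_adj.mpr hG] at htri
      simpa using htri
    | inr i =>
      obtain ⟨rfl, hi0⟩ := hmix x i hpq
      simp only [extCost_inl, extCost_inr, hi0, he, Nat.cast_zero, add_zero, le_refl]
  | inr i =>
    cases q with
    | inl y =>
      obtain ⟨rfl, hi0⟩ := hmix' y i hpq
      simp only [extCost_inl, extCost_inr, hi0, he, Nat.cast_zero, add_zero]
      exact le_trans (le_self_add (b := 1)) (le_self_add (b := 1))
    | inr j =>
      rcases hpath i j hpq with h | h
      · simp only [extCost_inr]
        have hj : ((j : ℕ) : ℕ∞) = ((i : ℕ) : ℕ∞) + 1 := by exact_mod_cast h.symm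
        rw [hj, ← add_assoc]
      · simp only [extCost_inr]
        have hij : ((j : ℕ) : ℕ∞) ≤ ((i : ℕ) : ℕ∞) + 1 := by exact_mod_cast (by omega : (j:ℕ) ≤ (i:ℕ)+1)
        calc e2 + 1 + ((j : ℕ) : ℕ∞) ≤ e2 + 1 + (((i : ℕ) : ℕ∞) + 1) := by gcongr
          _ = e2 + 1 + ((i : ℕ) : ℕ∞) + 1 := by rw [← add_assoc]

lemma deg3_construct {G : SimpleGraph V} [Fintype V] (hG : G.IsTree) {u v w a : V}
    (huv : G.Adj u v) (hvw : G.Adj v w) (hwu : w ≠ u)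
    (hva : G.Adj v a) (hau : a ≠ u) (haw : a ≠ w) :
    ∃ (W : Type) (H : SimpleGraph W) (ι : V → W), Compatible G 2 u H ι ∧
      ¬ (cSum (swapGraph H (ι u) (ι v) (ι w)) (ι u) ≤ cSum H (ι u)) ∧
      ¬ (cMax (swapGraph H (ι u) (ι v) (ι w)) (ι u) ≤ cMax H (ι u)) := by
  classical
  have huw : u ≠ w := hwu.symm
  set n := Fintype.card V with hn
  have hnpos : 0 < n := Fintype.card_pos_iff.mpr ⟨u⟩
  set L := n * n + 1 with hL
  have hnL : n ≤ L := by nlinarith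
  have hnuw : ¬ G.Adj u w := tree_no_triangle hG huv hvw
  have hnua : ¬ G.Adj u a := tree_no_triangle hG huv hva
  have hnwa : ¬ G.Adj w a := tree_no_triangle hG hvw.symm hva
  have hedua : G.edist u a = 2 := by
    refine enat_eq_two ?_ ?_ ?_
    · simpa using edist_le (Walk.cons huv (Walk.cons hva Walk.nil))
    · exact fun h => hau (edist_eq_zero_iff.mp h).symm
    · exact fun h => hnua (edist_eq_one_iff_adj.mp h)
  -- facts about G' := swapGraph G u v w
  have hG'uw : (swapGraph G u v w).Adj u w := (swap_adj huw _ _).mpr (Or.inr rfl)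
  have hG'ua : 3 ≤ (swapGraph G u v w).edist u a := by
    have hno : ¬ (swapGraph G u v w).edist u a ≤ 2 := by
      intro hle
      rcases edist_le_two_cases hle with h | h | ⟨m, hm1, hm2⟩
      · exact hau h.symm
      · rw [swap_adj huw] at h
        rcases h with ⟨h1, -⟩ | h1
        · exact hnua h1
        · rw [Sym2.eq_iff] at h1
          rcases h1 with ⟨-, h2⟩ | ⟨h2, -⟩
          · exact haw h2
          · exact huw h2
      · rw [swap_adj huw] at hm2
        rcases hm2 with ⟨hGma, -⟩ | h1
        · rw [swap_adj huw] at hm1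
          rcases hm1 with ⟨hGum, hs⟩ | h1
          · have hmv : m ≠ v := fun h => hs (by rw [h])
            exact hmv (tree_mid_unique hG hau.symm hGum hGma huv hva)
          · rw [Sym2.eq_iff] at h1
            rcases h1 with ⟨-, h2⟩ | ⟨h2, -⟩
            · exact hnwa (h2 ▸ hGma)
            · exact huw h2
        · rw [Sym2.eq_iff] at h1
          rcases h1 with ⟨-, h2⟩ | ⟨-, h2⟩
          · exact haw h2
          · exact hau h2
    have h2 : (2 : ℕ∞) < (swapGraph G u v w).edist u a := not_le.mp hno
    have h3 := Order.add_one_le_of_lt h2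
    exact le_trans (by norm_num) h3
  -- the compatible graph H := extGraph G a L
  have hinluw : (Sum.inl u : V ⊕ Fin L) ≠ Sum.inl w := by simp [huw]
  -- lower bound function for H
  have hlipH : ∀ p q, (extGraph G a L).Adj p q →
      extCost (L := L) 2 (G.edist u) q ≤ extCost 2 (G.edist u) p + 1 := by
    refine extCost_lipschitz hedua ?_ ?_ ?_ ?_
    · exact fun x y h => h
    · exact fun x i h => h
    · exact fun y i h => h
    · exact fun i j h => h
  have hlowH : ∀ x, extCost (L := L) 2 (G.edist u) x ≤ (extGraph G a L).edist (Sum.inl u) x :=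
    le_edist_of_lipschitz hlipH (by simp [SimpleGraph.edist_self]) 
  -- lower bound function for H' := swapGraph (extGraph G a L) (inl u) (inl v) (inl w)
  have hlipH' : ∀ p q, (swapGraph (extGraph G a L) (Sum.inl u) (Sum.inl v) (Sum.inl w)).Adj p q →
      extCost (L := L) ((swapGraph G u v w).edist u a) ((swapGraph G u v w).edist u) q ≤
      extCost ((swapGraph G u v w).edist u a) ((swapGraph G u v w).edist u) p + 1 := by
    refine extCost_lipschitz rfl ?_ ?_ ?_ ?_
    · intro x y h
      rw [swap_adj hinluw] at h
      rcases h with ⟨h1, h2⟩ | h1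
      · refine (swap_adj huw _ _).mpr (Or.inl ⟨h1, ?_⟩)
        intro hc
        apply h2
        rw [Sym2.eq_iff] at hc ⊢
        rcases hc with ⟨rfl, rfl⟩ | ⟨rfl, rfl⟩
        · exact Or.inl ⟨rfl, rfl⟩
        · exact Or.inr ⟨rfl, rfl⟩
      · refine (swap_adj huw _ _).mpr (Or.inr ?_)
        rw [Sym2.eq_iff] at h1 ⊢
        rcases h1 with ⟨hx, hy⟩ | ⟨hx, hy⟩
        · exact Or.inl ⟨Sum.inl.inj hx, Sum.inl.inj hy⟩
        · exact Or.inr ⟨Sum.inl.inj hx, Sum.inl.inj hy⟩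
    · intro x i h
      rw [swap_adj hinluw] at h
      rcases h with ⟨h1, -⟩ | h1
      · exact h1
      · exact absurd h1 (by simp [Sym2.eq_iff])
    · intro y i h
      rw [swap_adj hinluw] at h
      rcases h with ⟨h1, -⟩ | h1
      · exact h1
      · exact absurd h1 (by simp [Sym2.eq_iff])
    · intro i j h
      rw [swap_adj hinluw] at h
      rcases h with ⟨h1, -⟩ | h1
      · exact h1
      · exact absurd h1 (by simp [Sym2.eq_iff])
  have hlowH' : ∀ x, extCost (L := L) ((swapGraph G u v w).edist u a)
        ((swapGraph G u v w).edist u) x ≤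
      (swapGraph (extGraph G a L) (Sum.inl u) (Sum.inl v) (Sum.inl w)).edist (Sum.inl u) x :=
    le_edist_of_lipschitz hlipH' (by simp [SimpleGraph.edist_self])
  -- ball equality
  have hball : {x : V ⊕ Fin L | (extGraph G a L).edist (Sum.inl u) x ≤ ((2 : ℕ) : ℕ∞)} =
      Sum.inl '' ball G u 2 := by
    ext x
    constructor
    · intro hx
      cases x with
      | inl b =>
        refine ⟨b, ?_, rfl⟩
        have hb := le_trans (hlowH (Sum.inl b)) hx
        simpa [ball] using hb
      | inr i =>
        exfalso
        have hb := le_trans (hlowH (Sum.inr i)) hx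
        simp only [extCost_inr] at hb
        have h3 : (3 : ℕ∞) ≤ 2 + 1 + ((i : ℕ) : ℕ∞) := le_self_add
        have := le_trans h3 hb
        norm_num at this
    · rintro ⟨b, hb, rfl⟩
      calc (extGraph G a L).edist (Sum.inl u) (Sum.inl b) ≤ G.edist u b :=
            edist_hom_le (inlHom G a L) u b
        _ ≤ ((2 : ℕ) : ℕ∞) := hb
  have hcomp : Compatible G 2 u (extGraph G a L) Sum.inl := by
    exact ⟨inferInstance, ext_connected hG.isConnected a L, Sum.inl_injective.injOn, hball,
      fun a' _ b' _ => Iff.rfl⟩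
  refine ⟨V ⊕ Fin L, extGraph G a L, Sum.inl, hcomp, ?_, ?_⟩
  · -- SUM
    intro hle
    have hsumH : cSum (extGraph G a L) (Sum.inl u) ≤
        ((n * n : ℕ) : ℕ∞) + ∑ i : Fin L, ((3 + (i : ℕ) : ℕ) : ℕ∞) := by
      rw [cSum, tsum_fintype, Fintype.sum_sum_type]
      refine add_le_add ?_ ?_
      · calc ∑ x : V, (extGraph G a L).edist (Sum.inl u) (Sum.inl x)
            ≤ ∑ _x : V, ((n : ℕ) : ℕ∞) := by
              refine Finset.sum_le_sum fun x _ => ?_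
              exact (edist_hom_le (inlHom G a L) u x).trans (edist_le_card hG.isConnected u x)
          _ = ((n * n : ℕ) : ℕ∞) := by
              rw [Finset.sum_const, Finset.card_univ, nsmul_eq_mul]
              push_cast
              ring
      · refine Finset.sum_le_sum fun i _ => ?_
        calc (extGraph G a L).edist (Sum.inl u) (Sum.inr i)
            ≤ (extGraph G a L).edist (Sum.inl u) (Sum.inl a) +
              (extGraph G a L).edist (Sum.inl a) (Sum.inr i) := SimpleGraph.edist_triangle
          _ ≤ (2 : ℕ∞) + ((1 + (i : ℕ) : ℕ) : ℕ∞) := by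
              gcongr
              · exact (edist_hom_le (inlHom G a L) u a).trans (le_of_eq hedua)
              · exact ext_new_le a i
          _ = ((3 + (i : ℕ) : ℕ) : ℕ∞) := by push_cast; ring
    have hsumH' : (∑ i : Fin L, ((4 + (i : ℕ) : ℕ) : ℕ∞)) ≤
        cSum (swapGraph (extGraph G a L) (Sum.inl u) (Sum.inl v) (Sum.inl w)) (Sum.inl u) := by
      rw [cSum, tsum_fintype, Fintype.sum_sum_type]
      refine le_trans ?_ le_add_self
      refine Finset.sum_le_sum fun i _ => ?_
      refine le_trans ?_ (hlowH' (Sum.inr i))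
      simp only [extCost_inr]
      push_cast
      calc (4 : ℕ∞) + ((i : ℕ) : ℕ∞) = 3 + 1 + ((i : ℕ) : ℕ∞) := by ring
        _ ≤ (swapGraph G u v w).edist u a + 1 + ((i : ℕ) : ℕ∞) := by gcongr
    have hcomb := le_trans hsumH' (le_trans hle hsumH)
    rw [← Nat.cast_sum, ← Nat.cast_sum, ← Nat.cast_add, Nat.cast_le] at hcomb
    have hsplit : ∑ i : Fin L, (4 + (i : ℕ)) = (∑ i : Fin L, (3 + (i : ℕ))) + L := by
      calc ∑ i : Fin L, (4 + (i : ℕ)) = ∑ i : Fin L, ((3 + (i : ℕ)) + 1) :=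
            Finset.sum_congr rfl fun i _ => by ring
        _ = (∑ i : Fin L, (3 + (i : ℕ))) + ∑ _i : Fin L, 1 := Finset.sum_add_distrib
        _ = (∑ i : Fin L, (3 + (i : ℕ))) + L := by simp
    omega
  · -- MAX
    intro hle
    have hmaxH : cMax (extGraph G a L) (Sum.inl u) ≤ ((L + 2 : ℕ) : ℕ∞) := by
      rw [cMax]
      refine iSup_le fun x => ?_
      cases x with
      | inl b =>
        refine ((edist_hom_le (inlHom G a L) u b).trans (edist_le_card hG.isConnected u b)).trans ?_
        exact_mod_cast (by omega : n ≤ L + 2)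
      | inr i =>
        calc (extGraph G a L).edist (Sum.inl u) (Sum.inr i)
            ≤ (extGraph G a L).edist (Sum.inl u) (Sum.inl a) +
              (extGraph G a L).edist (Sum.inl a) (Sum.inr i) := SimpleGraph.edist_triangle
          _ ≤ (2 : ℕ∞) + ((1 + (i : ℕ) : ℕ) : ℕ∞) := by
              gcongr
              · exact (edist_hom_le (inlHom G a L) u a).trans (le_of_eq hedua)
              · exact ext_new_le a i
          _ ≤ ((L + 2 : ℕ) : ℕ∞) := by
              have : (i : ℕ) < L := i.isLt
              exact_mod_cast (by push_cast; exact_mod_cast (by omega : 2 + (1 + (i:ℕ)) ≤ L + 2) :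
                (2 : ℕ∞) + ((1 + (i : ℕ) : ℕ) : ℕ∞) ≤ ((L + 2 : ℕ) : ℕ∞))
    have hmaxH' : ((L + 3 : ℕ) : ℕ∞) ≤
        cMax (swapGraph (extGraph G a L) (Sum.inl u) (Sum.inl v) (Sum.inl w)) (Sum.inl u) := by
      rw [cMax]
      refine le_trans ?_ (le_iSup _ (Sum.inr (⟨n * n, by omega⟩ : Fin L)))
      refine le_trans ?_ (hlowH' (Sum.inr ⟨n * n, by omega⟩))
      simp only [extCost_inr]
      calc ((L + 3 : ℕ) : ℕ∞) = 3 + 1 + ((n * n : ℕ) : ℕ∞) := by rw [hL]; push_cast; ring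
        _ ≤ (swapGraph G u v w).edist u a + 1 + ((n * n : ℕ) : ℕ∞) := by gcongr
    have hcomb := le_trans hmaxH' (le_trans hle hmaxH)
    rw [Nat.cast_le] at hcomb
    omega

lemma case2_contra {G : SimpleGraph V} [Fintype V] (hG : G.IsTree) {u v w : V}
    (hval : ValidSwap G 2 u v w) (hvw : ¬ G.Adj v w) :
    ¬ (cSum (swapGraph G u v w) u ≤ cSum G u) ∧ ¬ (cMax (swapGraph G u v w) u ≤ cMax G u) := by
  classical
  obtain ⟨huv, hedw, hnuw, hwu⟩ := hval
  have hedw2 : G.edist u w ≤ (2 : ℕ∞) := by exact_mod_cast hedw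
  have htop : (swapGraph G u v w).edist u v = ⊤ := swap_disconnect hG huv hvw hedw2 hnuw hwu
  constructor
  · intro hle
    have h1 : cSum (swapGraph G u v w) u = ⊤ := by
      rw [cSum, tsum_fintype]
      have hs := Finset.single_le_sum (f := (swapGraph G u v w).edist u)
        (fun i _ => zero_le) (Finset.mem_univ v)
      rw [htop] at hs
      exact top_le_iff.mp hs
    have h2 : cSum G u ≠ ⊤ := by
      rw [cSum, tsum_fintype]
      exact (WithTop.sum_lt_top.mpr fun i _ =>
        lt_top_iff_ne_top.mpr (edist_ne_top_iff_reachable.mpr (hG.isConnected u i))).ne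
    rw [h1] at hle
    exact h2 (top_le_iff.mp hle)
  · intro hle
    have h1 : (⊤ : ℕ∞) ≤ cMax (swapGraph G u v w) u := by
      rw [cMax]
      exact le_trans (le_of_eq htop.symm) (le_iSup _ v)
    have h2 : cMax G u ≠ ⊤ := by
      rw [cMax]
      refine ((iSup_le fun x => edist_le_card hG.isConnected u x).trans_lt ?_).ne
      exact lt_top_iff_ne_top.mpr (by simp)
    exact h2 (top_le_iff.mp (le_trans h1 hle))

theorem stmt15 {V : Type} [Fintype V] (G : SimpleGraph V) [DecidableRel G.Adj]
    (hG : G.IsTree) (hn : 3 ≤ Fintype.card V) (u : V) :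
    ((∃ v w, WeakUnhappySumVia G 2 u v w) ↔
      ∃ v w : V, G.Adj u v ∧ G.Adj v w ∧ u ≠ w ∧ G.degree v = 2) ∧
    ((∃ v w, WeakUnhappyMaxVia G 2 u v w) ↔
      ∃ v w : V, G.Adj u v ∧ G.Adj v w ∧ u ≠ w ∧ G.degree v = 2) := by
  classical
  -- the right-to-left direction, shared
  have hmpr : ∀ v w : V, G.Adj u v → G.Adj v w → u ≠ w → G.degree v = 2 →
      WeakUnhappySumVia G 2 u v w ∧ WeakUnhappyMaxVia G 2 u v w := by
    intro v w huv hvw hune hdeg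
    have hsub : ({u, w} : Finset V) ⊆ G.neighborFinset v := by
      intro b hb
      rcases Finset.mem_insert.mp hb with rfl | hb
      · exact (mem_neighborFinset G v b).mpr huv.symm
      · rw [Finset.mem_singleton] at hb
        subst hb
        exact (mem_neighborFinset G v b).mpr hvw
    have hcard : ({u, w} : Finset V).card = 2 := by
      rw [Finset.card_insert_of_notMem (by simp [hune]), Finset.card_singleton]
    have hNeq : ({u, w} : Finset V) = G.neighborFinset v := by
      refine Finset.eq_of_subset_of_card_le hsub ?_
      rw [hcard, ← hdeg, degree]
    have hNv : ∀ b, G.Adj v b → b = u ∨ b = w := by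
      intro b hb
      have : b ∈ ({u, w} : Finset V) := by
        rw [hNeq]; exact (mem_neighborFinset G v b).mpr hb
      simpa using this
    exact weak_of_deg2 hG huv hvw hune hNv
  -- the left-to-right direction, shared: from any unhappy swap derive the degree-2 witness
  have hmp : ∀ v w : V, ValidSwap G 2 u v w →
      (∀ (W : Type) (H : SimpleGraph W) (ι : V → W), Compatible G 2 u H ι →
        cSum (swapGraph H (ι u) (ι v) (ι w)) (ι u) ≤ cSum H (ι u)) ∨
      (∀ (W : Type) (H : SimpleGraph W) (ι : V → W), Compatible G 2 u H ι →
        cMax (swapGraph H (ι u) (ι v) (ι w)) (ι u) ≤ cMax H (ι u)) →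
      ∃ v w : V, G.Adj u v ∧ G.Adj v w ∧ u ≠ w ∧ G.degree v = 2 := by
    intro v w hval hall
    have huv := hval.1
    by_cases hdeg : G.degree v = 2
    · -- extract the other neighbor of v
      have hu : u ∈ G.neighborFinset v := (mem_neighborFinset G v u).mpr huv.symm
      have hcard : (G.neighborFinset v).card = 2 := hdeg
      have hpos : 0 < ((G.neighborFinset v).erase u).card := by
        rw [Finset.card_erase_of_mem hu, hcard]
        omega
      obtain ⟨w', hw'⟩ := Finset.card_pos.mp hpos
      obtain ⟨hw'u, hw'mem⟩ := Finset.mem_erase.mp hw'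
      exact ⟨v, w', huv, (mem_neighborFinset G v w').mp hw'mem, fun h => hw'u h.symm, hdeg⟩
    · exfalso
      by_cases hvwadj : G.Adj v w
      · -- degree of v is at least 3: find a third neighbor a
        have hsub : ({u, w} : Finset V) ⊆ G.neighborFinset v := by
          intro b hb
          rcases Finset.mem_insert.mp hb with rfl | hb
          · exact (mem_neighborFinset G v b).mpr huv.symm
          · rw [Finset.mem_singleton] at hb
            subst hb
            exact (mem_neighborFinset G v b).mpr hvwadj
        have hwu : w ≠ u := hval.2.2.2
        have hcard2 : ({u, w} : Finset V).card = 2 := by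
          rw [Finset.card_insert_of_notMem (by simp [hwu.symm]), Finset.card_singleton]
        have hge2 : 2 ≤ (G.neighborFinset v).card := by
          rw [← hcard2]; exact Finset.card_le_card hsub
        have hge3 : 3 ≤ (G.neighborFinset v).card := by
          rcases Nat.lt_or_ge (G.neighborFinset v).card 3 with h | h
          · exact absurd (by omega : (G.neighborFinset v).card = 2) hdeg
          · exact h
        have hpos : 0 < (G.neighborFinset v \ {u, w}).card := by
          rw [Finset.card_sdiff_of_subset hsub, hcard2]
          omega
        obtain ⟨a, ha⟩ := Finset.card_pos.mp hpos
        obtain ⟨hamem, hanot⟩ := Finset.mem_sdiff.mp ha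
        have hva : G.Adj v a := (mem_neighborFinset G v a).mp hamem
        have hau : a ≠ u := fun h => hanot (by simp [h])
        have haw : a ≠ w := fun h => hanot (by simp [h])
        obtain ⟨W, H, ι, hcomp, hS, hM⟩ := deg3_construct hG huv hvwadj hwu hva hau haw
        rcases hall with hall | hall
        · exact hS (hall W H ι hcomp)
        · exact hM (hall W H ι hcomp)
      · -- w is not a neighbor of v: the swap disconnects
        have hc2 := case2_contra hG hval hvwadj
        rcases hall with hall | hall
        · exact hc2.1 (hall V G id (self_compatible hG.isConnected u))
        · exact hc2.2 (hall V G id (self_compatible hG.isConnected u))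
  constructor
  · constructor
    · rintro ⟨v, w, hval, hall⟩
      exact hmp v w hval (Or.inl hall)
    · rintro ⟨v, w, huv, hvw, hune, hdeg⟩
      exact ⟨v, w, (hmpr v w huv hvw hune hdeg).1⟩
  · constructor
    · rintro ⟨v, w, hval, hall⟩
      exact hmp v w hval (Or.inr hall)
    · rintro ⟨v, w, huv, hvw, hune, hdeg⟩
      exact ⟨v, w, (hmpr v w huv hvw hune hdeg).2⟩

end SwapGame
end
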